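/- arXiv:math/0602515 — 3 statements merged into one kernel-verified Lean document; each statement's English description precedes it below -/
import Mathlib

section
/- Let x = (x_1,…,x_4) ∈ Z^4 with |x_i| ≤ n/2 for i = 1,…,4, and let x' ∈ Z_n^4 be its reduction modulo n. Then for every constant C' > 0 there is a constant C such that for all n ≥ 2 and all integers t with 0 ≤ t ≤ C' n^2, one has q_t(x,0) ≤ p_{t,n}(x',0) ≤ q_t(x,0) + C/n^4. -/
open MeasureTheory ProbabilityTheory Filter
open scoped ENNReal

noncomputable section
open scoped Classical

/-- The four-dimensional discrete torus `Z_n^4`. -/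
abbrev Torus (n : ℕ) : Type := Fin 4 → ZMod n

instance (n : ℕ) : MeasurableSpace (ZMod n) := ⊤

/-- The `i`-th standard unit vector in `ℤ⁴`. -/
def unitVec (i : Fin 4) : Fin 4 → ℤ := fun j => if j = i then 1 else 0

/-- One-step distribution of the lazy simple random walk on `ℤ⁴`: stay put with
probability `1/2`, move to each of the 8 nearest neighbours with probability `1/16`. -/
def stepProb (x : Fin 4 → ℤ) : ℝ≥0∞ :=
  if x = 0 then 1 / 2
  else if ∃ i, x = unitVec i ∨ x = -unitVec i then 1 / 16 else 0

/-- `latticeQ t x` is the `t`-step transition probability `q_t(0, x)` of the lazy walk on `ℤ⁴`. -/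
def latticeQ : ℕ → (Fin 4 → ℤ) → ℝ≥0∞
  | 0 => fun x => if x = 0 then 1 else 0
  | t + 1 => fun x => ∑' y : Fin 4 → ℤ, latticeQ t y * stepProb (x - y)

/-- `q_t(x, y)`, the `t`-step transition probabilities of the lazy walk on `ℤ⁴`. -/
def lq (t : ℕ) (x y : Fin 4 → ℤ) : ℝ≥0∞ := latticeQ t (y - x)

/-- Reduction of a point of `ℤ⁴` modulo `n`. -/
def torusProj (n : ℕ) (x : Fin 4 → ℤ) : Torus n := fun i => (x i : ZMod n)

/-- `tp t n x y` is the transition probability `p_{t,n}(x,y)` of the walk on the torus. -/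
def tp (t n : ℕ) (x y : Torus n) : ℝ≥0∞ :=
  ∑' z : Fin 4 → ℤ, if torusProj n z = y - x then latticeQ t z else 0

/-- The uniform mixing time `τ_n`. -/
def mixTime (n : ℕ) : ℕ :=
  sInf {t : ℕ | ∀ x : Torus n,
    |(tp t n 0 x).toReal - 1 / (n : ℝ) ^ 4| ≤ 1 / (2 * (n : ℝ) ^ 4)}

variable {Ω : Type*} [MeasureSpace Ω]

/-- `X` is a random walk on the torus `Z_n^4`: the increments are i.i.d. with the lazy
step distribution (reduced mod `n`), independent of the starting point. -/
def IsTorusWalk (n : ℕ) (X : ℕ → Ω → Torus n) : Prop :=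
  (∀ t, Measurable (X t)) ∧
  ∃ ξ : ℕ → Ω → (Fin 4 → ℤ),
    (∀ k, Measurable (ξ k)) ∧
    (∀ k x, volume {ω | ξ k ω = x} = stepProb x) ∧
    iIndepFun ξ volume ∧
    IndepFun (X 0) (fun ω k => ξ k ω) volume ∧
    ∀ t ω, X t ω = X 0 ω + torusProj n (∑ k ∈ Finset.range t, ξ k ω)

/-- `Z` is a lazy random walk on `ℤ⁴`. -/
def IsLatticeWalk (Z : ℕ → Ω → Fin 4 → ℤ) : Prop :=
  (∀ t, Measurable (Z t)) ∧
  ∃ ξ : ℕ → Ω → (Fin 4 → ℤ),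
    (∀ k, Measurable (ξ k)) ∧
    (∀ k x, volume {ω | ξ k ω = x} = stepProb x) ∧
    iIndepFun ξ volume ∧
    IndepFun (Z 0) (fun ω k => ξ k ω) volume ∧
    ∀ t ω, Z t ω = Z 0 ω + ∑ k ∈ Finset.range t, ξ k ω

/-- The random variable `Z` is uniformly distributed on the torus. -/
def IsUniformStart (n : ℕ) (Z : Ω → Torus n) : Prop :=
  ∀ v : Torus n, volume {ω | Z ω = v} = ((n : ℝ≥0∞) ^ 4)⁻¹

/-- The part of a list strictly after the last occurrence of `u` (the whole list if `u`
does not occur). -/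
def afterLast {V : Type*} [DecidableEq V] (u : V) (l : List V) : List V :=
  (l.reverse.takeWhile (fun v => decide (v ≠ u))).reverse

lemma afterLast_length_le {V : Type*} [DecidableEq V] (u : V) (l : List V) :
    (afterLast u l).length ≤ l.length := by
  unfold afterLast
  rw [List.length_reverse]
  calc (l.reverse.takeWhile _).length ≤ l.reverse.length :=
        (List.takeWhile_sublist _).length_le
    _ = l.length := List.length_reverse

/-- Chronological loop erasure `LE(λ)` of a finite path `λ`. -/
def loopErase {V : Type*} [DecidableEq V] : List V → List V
  | [] => []
  | u :: us => u :: loopErase (afterLast u us)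
  termination_by l => l.length
  decreasing_by
    simp only [List.length_cons]
    exact Nat.lt_succ_of_le (afterLast_length_le u us)

/-- The path `X[0,L]` of a walk, as a list of visited points. -/
def pathOf {α : Type*} (X : ℕ → Ω → α) (L : ℕ) (ω : Ω) : List α :=
  (List.range (L + 1)).map fun t => X t ω

/-- `u` is a `k`-local cutpoint of the walk `X` (for the outcome `ω`):
`{X_{u-k},…,X_{u-1}} ∩ {X_{u+1},…,X_{u+k}} = ∅`. -/
def IsLocalCutpt {α : Type*} (X : ℕ → Ω → α) (k u : ℕ) (ω : Ω) : Prop :=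
  ∀ a b : ℕ, 1 ≤ a → a ≤ k → a ≤ u → 1 ≤ b → b ≤ k → X (u - a) ω ≠ X (u + b) ω

/-- `Cap_M(U)`, computed from an auxiliary walk `W` started from the uniform distribution. -/
def capProb {Ω' : Type*} [MeasureSpace Ω'] {n : ℕ} (W : ℕ → Ω' → Torus n)
    (M : ℕ) (U : Set (Torus n)) : ℝ≥0∞ :=
  volume {ω' | ∃ t ≤ M, W t ω' ∈ U}

/-- `Close_M(U, V)`, computed from an auxiliary walk `W` started from the uniform
distribution. -/
def closeProb {Ω' : Type*} [MeasureSpace Ω'] {n : ℕ} (W : ℕ → Ω' → Torus n)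
    (M : ℕ) (U V : Set (Torus n)) : ℝ≥0∞ :=
  volume {ω' | (∃ t ≤ M, W t ω' ∈ U) ∧ (∃ s ≤ M, W s ω' ∈ V)}

end

/-!
A step of the lazy walk on `ℤ⁴` picks a coordinate uniformly and makes a lazy one-dimensional
step in it. Hence `q_t(0, z)` is the average over coordinate sequences `c` of `∏ᵢ r_{Nᵢ}(zᵢ)`,
where `Nᵢ` counts the choices of `i` and `r_N` is the `N`-step lazy kernel on `ℤ`, and
`p_{t,n}(x', 0)` is the same average of `∏ᵢ ∑_{a ≡ -xᵢ} r_{Nᵢ}(a)`. The lift `a = -xᵢ` gives the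
lower bound. For the upper bound, `r_N ≤ (N + 1)^{-1/2}` (central binomial coefficient) and
`r_N(a) a⁶ ≲ N³ (N + 1)^{-1/2}` (sixth moment and Chapman–Kolmogorov), so the lifts `a ≠ -xᵢ`,
which satisfy `|a| ≳ |k| n` for `a = -xᵢ + k n`, contribute at most `β (Nᵢ + 1)^{-1/2}` with
`β ≲ t³ / n⁶`. Expanding the product, the error is `≲ β` times the multinomial average of
`∏ᵢ (Nᵢ + 1)^{-1/2}`, which is `O(t⁻²)` by AM–GM and the formula
`∑_c x^{N₀} y^{N₁} = (x + y + 2)^t` integrated over the unit square. The error is therefore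
`≲ t / n⁶ ≤ C' / n⁴`.
-/

open Finset

lemma add_pow_six_le (x y : ℝ) : (x + y) ^ 6 ≤ 32 * (x ^ 6 + y ^ 6) := by
  have h := add_pow_le (abs_nonneg x) (abs_nonneg y) 6
  rw [← Even.pow_abs ⟨3, rfl⟩ x, ← Even.pow_abs ⟨3, rfl⟩ y, ← Even.pow_abs ⟨3, rfl⟩ (x + y)]
  calc |x + y| ^ 6 ≤ (|x| + |y|) ^ 6 := by gcongr; exact abs_add_le x y
    _ ≤ 32 * (|x| ^ 6 + |y| ^ 6) := by norm_num at h; exact h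

lemma prod_add_le_prod_add_card_mul {ι : Type*} (s : Finset ι) {R T u : ι → ℝ} {δ : ℝ}
    (hδ : 0 ≤ δ) (hR : ∀ i ∈ s, 0 ≤ R i) (hT : ∀ i ∈ s, 0 ≤ T i)
    (hRT : ∀ i ∈ s, R i + T i ≤ u i) (hTu : ∀ i ∈ s, T i ≤ δ * u i) :
    ∏ i ∈ s, (R i + T i) ≤ ∏ i ∈ s, R i + #s * δ * ∏ i ∈ s, u i := by
  classical
  induction s using Finset.induction_on with
  | empty => simp
  | insert j s hj ih =>
    simp only [mem_insert, forall_eq_or_imp] at hR hT hRT hTu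
    have hu : ∀ i ∈ s, 0 ≤ u i := fun i hi => by linarith [hR.2 i hi, hT.2 i hi, hRT.2 i hi]
    have hprod : ∏ i ∈ s, (R i + T i) ≤ ∏ i ∈ s, u i :=
      prod_le_prod (fun i hi => add_nonneg (hR.2 i hi) (hT.2 i hi)) hRT.2
    have hrest : 0 ≤ #s * δ * ∏ i ∈ s, u i := by
      have := prod_nonneg hu; positivity
    rw [prod_insert hj, prod_insert hj, prod_insert hj, card_insert_of_notMem hj]
    calc (R j + T j) * ∏ i ∈ s, (R i + T i)
        = R j * ∏ i ∈ s, (R i + T i) + T j * ∏ i ∈ s, (R i + T i) := add_mul _ _ _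
      _ ≤ R j * (∏ i ∈ s, R i + #s * δ * ∏ i ∈ s, u i) + δ * u j * ∏ i ∈ s, u i := by
        gcongr
        · exact hR.1
        · exact ih hR.2 hT.2 hRT.2 hTu.2
        · exact prod_nonneg fun i hi => add_nonneg (hR.2 i hi) (hT.2 i hi)
        · linarith [hR.1, hT.1, hRT.1]
        · exact hTu.1
      _ ≤ R j * ∏ i ∈ s, R i + u j * (#s * δ * ∏ i ∈ s, u i) + δ * u j * ∏ i ∈ s, u i := by
        rw [mul_add]
        gcongr
        linarith [hT.1, hRT.1]
      _ = R j * ∏ i ∈ s, R i + ↑(#s + 1) * δ * (u j * ∏ i ∈ s, u i) := by push_cast; ring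

section coordCount

variable {ι : Type*} [DecidableEq ι] {t : ℕ}

def coordCount (c : Fin t → ι) (i : ι) : ℕ := #{k | c k = i}

lemma coordCount_le (c : Fin t → ι) (i : ι) : coordCount c i ≤ t :=
  (card_filter_le _ _).trans (card_fin t).le

lemma coordCount_cons (j : ι) (c : Fin t → ι) :
    coordCount (Fin.cons j c : Fin (t + 1) → ι) =
      Function.update (coordCount c) j (coordCount c j + 1) := by
  funext i
  simp only [coordCount, card_filter, Fin.sum_univ_succ, Fin.cons_zero, Fin.cons_succ,
    Function.update_apply]
  by_cases h : i = j
  · subst h; simp [add_comm]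
  · simp [h, Ne.symm h]

lemma sum_prod_pow_coordCount {R : Type*} [CommSemiring R] [Fintype ι] (w : ι → R) :
    ∑ c : Fin t → ι, ∏ i, w i ^ coordCount c i = (∑ i, w i) ^ t := by
  rw [Fintype.sum_pow]
  refine sum_congr rfl fun c _ => ?_
  rw [← prod_fiberwise' univ c w]
  simp [coordCount]

end coordCount

/-! ### The lazy walk on `ℤ` -/

noncomputable def lazyKernel : ℕ → ℤ → ℝ
  | 0, a => if a = 0 then 1 else 0
  | N + 1, a => lazyKernel N a / 2 + lazyKernel N (a - 1) / 4 + lazyKernel N (a + 1) / 4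

lemma lazyKernel_zero (a : ℤ) : lazyKernel 0 a = if a = 0 then 1 else 0 := rfl

lemma lazyKernel_succ (N : ℕ) (a : ℤ) :
    lazyKernel (N + 1) a =
      lazyKernel N a / 2 + lazyKernel N (a - 1) / 4 + lazyKernel N (a + 1) / 4 := rfl

lemma lazyKernel_nonneg (N : ℕ) (a : ℤ) : 0 ≤ lazyKernel N a := by
  induction N generalizing a with
  | zero => rw [lazyKernel_zero]; split_ifs <;> norm_num
  | succ N ih => rw [lazyKernel_succ]; linarith [ih a, ih (a - 1), ih (a + 1)]

lemma lazyKernel_eq_zero_of_lt_abs {N : ℕ} {a : ℤ} (h : (N : ℤ) < |a|) : lazyKernel N a = 0 := by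
  induction N generalizing a with
  | zero => rw [lazyKernel_zero, if_neg (by rintro rfl; simp at h)]
  | succ N ih =>
    rw [lt_abs] at h
    rw [lazyKernel_succ, ih (lt_abs.mpr (by omega)), ih (lt_abs.mpr (by omega)),
      ih (lt_abs.mpr (by omega))]
    norm_num

lemma choose_add_two_add_two (m k : ℕ) :
    (m + 2).choose (k + 2) = m.choose k + 2 * m.choose (k + 1) + m.choose (k + 2) := by
  simp only [Nat.choose_succ_succ']
  ring

/-- The lazy walk on `ℤ` is the simple walk with steps `±1/2` observed every other step. -/
lemma lazyKernel_natCast_sub_eq_choose (N k : ℕ) :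
    lazyKernel N (k - N) = (2 * N).choose k / 4 ^ N := by
  induction N generalizing k with
  | zero => rcases k with _ | k <;> simp [lazyKernel_zero]; omega
  | succ N ih =>
    have h0 : ∀ j : ℤ, j < -N → lazyKernel N j = 0 := fun j hj =>
      lazyKernel_eq_zero_of_lt_abs (lt_abs.mpr (by omega))
    rw [lazyKernel_succ]
    rcases k with _ | _ | k
    · rw [h0 _ (by omega), h0 _ (by omega), show ((0 : ℕ) : ℤ) - (N + 1 : ℕ) + 1 = (0 : ℕ) - N by
        push_cast; ring, ih]
      simp [pow_succ]
      ring
    · rw [show ((1 : ℕ) : ℤ) - (N + 1 : ℕ) = (0 : ℕ) - N by push_cast; ring,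
        h0 ((0 : ℕ) - N - 1) (by omega),
        show ((0 : ℕ) : ℤ) - N + 1 = (1 : ℕ) - N by push_cast; ring, ih, ih]
      simp [pow_succ, Nat.mul_succ]
      ring
    · rw [show ((k + 2 : ℕ) : ℤ) - (N + 1 : ℕ) = (k + 1 : ℕ) - N by push_cast; ring,
        show ((k + 1 : ℕ) : ℤ) - N - 1 = k - N by push_cast; ring,
        show ((k + 1 : ℕ) : ℤ) - N + 1 = (k + 2 : ℕ) - N by push_cast; ring, ih, ih, ih,
        show 2 * (N + 1) = 2 * N + 2 by ring, choose_add_two_add_two]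
      push_cast
      ring

lemma two_mul_add_one_mul_centralBinom_sq_le (N : ℕ) :
    (2 * N + 1) * N.centralBinom ^ 2 ≤ 16 ^ N := by
  induction N with
  | zero => simp
  | succ N ih =>
    refine Nat.le_of_mul_le_mul_left ?_ (by positivity : 0 < (N + 1) ^ 2)
    calc (N + 1) ^ 2 * ((2 * (N + 1) + 1) * (N + 1).centralBinom ^ 2)
        = (2 * N + 3) * ((N + 1) * (N + 1).centralBinom) ^ 2 := by ring
      _ = (2 * N + 3) * (2 * N + 1) * (4 * ((2 * N + 1) * N.centralBinom ^ 2)) := by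
        rw [Nat.succ_mul_centralBinom_succ]; ring
      _ ≤ (2 * N + 2) * (2 * N + 2) * (4 * 16 ^ N) :=
        Nat.mul_le_mul (by nlinarith) (Nat.mul_le_mul_left 4 ih)
      _ = (N + 1) ^ 2 * 16 ^ (N + 1) := by ring

lemma lazyKernel_le_inv_sqrt (N : ℕ) (a : ℤ) : lazyKernel N a ≤ (√(N + 1))⁻¹ := by
  rcases lt_or_ge (N : ℤ) |a| with h | h
  · rw [lazyKernel_eq_zero_of_lt_abs h]; positivity
  obtain ⟨k, rfl⟩ : ∃ k : ℕ, a = k - N := ⟨(a + N).toNat, by rw [abs_le] at h; omega⟩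
  have hcb : ((2 * N + 1) * N.centralBinom ^ 2 : ℝ) ≤ 16 ^ N := by
    exact_mod_cast two_mul_add_one_mul_centralBinom_sq_le N
  have hk : ((2 * N).choose k : ℝ) ≤ N.centralBinom := by
    exact_mod_cast Nat.choose_le_centralBinom k N
  rw [lazyKernel_natCast_sub_eq_choose, ← Real.sqrt_inv,
    Real.le_sqrt (by positivity) (by positivity), div_pow, div_le_iff₀ (by positivity),
    show ((4 : ℝ) ^ N) ^ 2 = 16 ^ N by rw [← pow_mul, mul_comm, pow_mul]; norm_num, inv_mul_eq_div,
    le_div_iff₀ (by positivity)]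
  calc ((2 * N).choose k : ℝ) ^ 2 * (N + 1) ≤ N.centralBinom ^ 2 * (2 * N + 1) := by
        gcongr; linarith
    _ ≤ 16 ^ N := by linarith

lemma sum_lazyKernel_mul_of_subset {N : ℕ} {s : Finset ℤ} (hs : Icc (-(N : ℤ)) N ⊆ s)
    (g : ℤ → ℝ) :
    ∑ a ∈ s, lazyKernel N a * g a = ∑ a ∈ Icc (-(N : ℤ)) N, lazyKernel N a * g a := by
  refine (sum_subset hs fun a _ ha => ?_).symm
  rw [mem_Icc] at ha
  rw [lazyKernel_eq_zero_of_lt_abs (lt_abs.mpr (by omega)), zero_mul]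

lemma sum_lazyKernel_sub_mul {N : ℕ} {d : ℤ} (hd : |d| ≤ 1) (g : ℤ → ℝ) :
    ∑ a ∈ Icc (-(N + 1 : ℤ)) (N + 1), lazyKernel N (a - d) * g a =
      ∑ b ∈ Icc (-(N : ℤ)) N, lazyKernel N b * g (b + d) := by
  have hmap := sum_map (Icc (-(N + 1 : ℤ) - d) (N + 1 - d)) (addRightEmbedding d)
    (fun a => lazyKernel N (a - d) * g a)
  rw [map_add_right_Icc, sub_add_cancel, sub_add_cancel] at hmap
  simp only [addRightEmbedding_apply, add_sub_cancel_right] at hmap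
  rw [abs_le] at hd
  rw [hmap, sum_lazyKernel_mul_of_subset fun b hb => by rw [mem_Icc] at hb ⊢; omega]

lemma sum_lazyKernel_succ_mul (N : ℕ) (g : ℤ → ℝ) :
    ∑ a ∈ Icc (-(N + 1 : ℤ)) (N + 1), lazyKernel (N + 1) a * g a =
      ∑ b ∈ Icc (-(N : ℤ)) N, lazyKernel N b * (g b / 2 + g (b + 1) / 4 + g (b - 1) / 4) := by
  have hsplit : ∀ a, lazyKernel (N + 1) a * g a = lazyKernel N (a - 0) * (g a / 2) +
      lazyKernel N (a - 1) * (g a / 4) + lazyKernel N (a - -1) * (g a / 4) := fun a => by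
    rw [lazyKernel_succ, sub_zero, sub_neg_eq_add]; ring
  rw [sum_congr rfl fun a _ => hsplit a, sum_add_distrib, sum_add_distrib,
    sum_lazyKernel_sub_mul (by simp), sum_lazyKernel_sub_mul (by simp),
    sum_lazyKernel_sub_mul (by simp), ← sum_add_distrib, ← sum_add_distrib]
  refine sum_congr rfl fun b _ => ?_
  rw [add_zero, ← sub_eq_add_neg]
  ring

lemma sum_lazyKernel (N : ℕ) : ∑ a ∈ Icc (-(N : ℤ)) N, lazyKernel N a = 1 := by
  induction N with
  | zero => simp [lazyKernel_zero]
  | succ N ih =>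
    simpa [← mul_add, ← sum_mul, ih, show (2 : ℝ)⁻¹ + 4⁻¹ + 4⁻¹ = 1 by norm_num] using
      sum_lazyKernel_succ_mul N fun _ => 1

lemma sum_lazyKernel_mul_sq (N : ℕ) :
    ∑ a ∈ Icc (-(N : ℤ)) N, lazyKernel N a * (a : ℝ) ^ 2 = N / 2 := by
  induction N with
  | zero => simp [lazyKernel_zero]
  | succ N ih =>
    have step : ∀ b : ℤ, lazyKernel N b * ((b : ℝ) ^ 2 / 2 + ((b + 1 : ℤ) : ℝ) ^ 2 / 4 +
        ((b - 1 : ℤ) : ℝ) ^ 2 / 4) = lazyKernel N b * (b : ℝ) ^ 2 + lazyKernel N b / 2 := by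
      intro b; push_cast; ring
    push_cast
    rw [sum_lazyKernel_succ_mul N fun a => (a : ℝ) ^ 2]
    simp only [step, sum_add_distrib, ← sum_div, ih, sum_lazyKernel]
    ring

lemma sum_lazyKernel_mul_pow_four_le (N : ℕ) :
    ∑ a ∈ Icc (-(N : ℤ)) N, lazyKernel N a * (a : ℝ) ^ 4 ≤ 2 * N ^ 2 := by
  induction N with
  | zero => simp [lazyKernel_zero]
  | succ N ih =>
    have step : ∀ b : ℤ, lazyKernel N b * ((b : ℝ) ^ 4 / 2 + ((b + 1 : ℤ) : ℝ) ^ 4 / 4 +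
        ((b - 1 : ℤ) : ℝ) ^ 4 / 4) = lazyKernel N b * (b : ℝ) ^ 4 +
          3 * (lazyKernel N b * (b : ℝ) ^ 2) + lazyKernel N b / 2 := by
      intro b; push_cast; ring
    push_cast
    rw [sum_lazyKernel_succ_mul N fun a => (a : ℝ) ^ 4]
    simp only [step, sum_add_distrib, ← mul_sum, ← sum_div, sum_lazyKernel_mul_sq, sum_lazyKernel]
    nlinarith [(N.cast_nonneg : (0 : ℝ) ≤ N)]

lemma sum_lazyKernel_mul_pow_six_le (N : ℕ) :
    ∑ a ∈ Icc (-(N : ℤ)) N, lazyKernel N a * (a : ℝ) ^ 6 ≤ 8 * N ^ 3 := by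
  induction N with
  | zero => simp [lazyKernel_zero]
  | succ N ih =>
    have step : ∀ b : ℤ, lazyKernel N b * ((b : ℝ) ^ 6 / 2 + ((b + 1 : ℤ) : ℝ) ^ 6 / 4 +
        ((b - 1 : ℤ) : ℝ) ^ 6 / 4) = lazyKernel N b * (b : ℝ) ^ 6 +
          15 / 2 * (lazyKernel N b * (b : ℝ) ^ 4) + 15 / 2 * (lazyKernel N b * (b : ℝ) ^ 2) +
          lazyKernel N b / 2 := by
      intro b; push_cast; ring
    push_cast
    rw [sum_lazyKernel_succ_mul N fun a => (a : ℝ) ^ 6]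
    simp only [step, sum_add_distrib, ← mul_sum, ← sum_div, sum_lazyKernel_mul_sq, sum_lazyKernel]
    nlinarith [sum_lazyKernel_mul_pow_four_le N, (N.cast_nonneg : (0 : ℝ) ≤ N)]

lemma sum_lazyKernel_mul_pow_six_le_of_finset (N : ℕ) (s : Finset ℤ) :
    ∑ a ∈ s, lazyKernel N a * (a : ℝ) ^ 6 ≤ 8 * N ^ 3 :=
  calc ∑ a ∈ s, lazyKernel N a * (a : ℝ) ^ 6
      ≤ ∑ a ∈ s ∪ Icc (-(N : ℤ)) N, lazyKernel N a * (a : ℝ) ^ 6 :=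
        sum_le_sum_of_subset_of_nonneg subset_union_left fun a _ _ =>
          mul_nonneg (lazyKernel_nonneg N a) (by positivity)
    _ ≤ 8 * N ^ 3 := by
        rw [sum_lazyKernel_mul_of_subset subset_union_right]
        exact sum_lazyKernel_mul_pow_six_le N

lemma lazyKernel_add (A B : ℕ) (a : ℤ) :
    lazyKernel (A + B) a = ∑ b ∈ Icc (-(A : ℤ)) A, lazyKernel A b * lazyKernel B (a - b) := by
  induction B generalizing a with
  | zero =>
    simp only [lazyKernel_zero, sub_eq_zero, mul_ite, mul_one, mul_zero, sum_ite_eq, add_zero]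
    split_ifs with ha
    · rfl
    · rw [mem_Icc] at ha
      exact lazyKernel_eq_zero_of_lt_abs (lt_abs.mpr (by omega))
  | succ B ih =>
    rw [← add_assoc, lazyKernel_succ, ih, ih, ih, sum_div, sum_div, sum_div, ← sum_add_distrib,
      ← sum_add_distrib]
    refine sum_congr rfl fun b _ => ?_
    rw [lazyKernel_succ B (a - b), sub_right_comm, show a + 1 - b = a - b + 1 by ring]
    ring

/-- Split `N = A + B` and bound `a⁶ ≲ b⁶ + (a - b)⁶`: each half contributes its sixth moment
times the sup bound of the other half. -/
lemma lazyKernel_mul_pow_six_le (N : ℕ) (a : ℤ) :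
    lazyKernel N a * (a : ℝ) ^ 6 ≤ 1024 * N ^ 3 / √(N + 1) := by
  obtain ⟨A, B, rfl, hBA, hAB⟩ : ∃ A B : ℕ, N = A + B ∧ B ≤ A ∧ A ≤ B + 1 :=
    ⟨(N + 1) / 2, N / 2, by omega, by omega, by omega⟩
  have hB : (B : ℝ) ≤ A := by exact_mod_cast hBA
  have hA : (A : ℝ) ≤ ↑(A + B) := by exact_mod_cast Nat.le_add_right A B
  have hsqrtA : (√(A + 1))⁻¹ ≤ (√(B + 1))⁻¹ := by gcongr
  have hsqrtB : (√(B + 1))⁻¹ ≤ 2 / √(↑(A + B) + 1) := by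
    rw [← one_div, div_le_div_iff₀ (by positivity) (by positivity), one_mul,
      show (2 : ℝ) = √4 by rw [show (4 : ℝ) = 2 ^ 2 by norm_num, Real.sqrt_sq zero_le_two],
      ← Real.sqrt_mul zero_le_four]
    gcongr
    push_cast
    have : (A : ℝ) ≤ B + 1 := by exact_mod_cast hAB
    linarith
  have hfar : ∑ b ∈ Icc (-(A : ℤ)) A, lazyKernel B (a - b) * ((a - b : ℤ) : ℝ) ^ 6 ≤ 8 * B ^ 3 := by
    rw [← sum_image (f := fun c => lazyKernel B c * (c : ℝ) ^ 6) (g := (a - ·))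
      fun x _ y _ h => by simpa using h]
    exact sum_lazyKernel_mul_pow_six_le_of_finset B _
  have hr := lazyKernel_nonneg
  calc lazyKernel (A + B) a * (a : ℝ) ^ 6
      = ∑ b ∈ Icc (-(A : ℤ)) A, lazyKernel A b * lazyKernel B (a - b) * (a : ℝ) ^ 6 := by
        rw [lazyKernel_add, sum_mul]
    _ ≤ ∑ b ∈ Icc (-(A : ℤ)) A, 32 * (lazyKernel A b * (b : ℝ) ^ 6 * lazyKernel B (a - b) +
          lazyKernel A b * (lazyKernel B (a - b) * ((a - b : ℤ) : ℝ) ^ 6)) := by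
        refine sum_le_sum fun b _ => ?_
        have h := add_pow_six_le b ((a - b : ℤ) : ℝ)
        rw [show (b : ℝ) + ((a - b : ℤ) : ℝ) = a by push_cast; ring] at h
        have := mul_le_mul_of_nonneg_left h (mul_nonneg (hr A b) (hr B (a - b)))
        linarith
    _ ≤ ∑ b ∈ Icc (-(A : ℤ)) A, 32 * (lazyKernel A b * (b : ℝ) ^ 6 * (√(B + 1))⁻¹ +
          (√(A + 1))⁻¹ * (lazyKernel B (a - b) * ((a - b : ℤ) : ℝ) ^ 6)) := by
        gcongr with b
        · exact mul_nonneg (hr A b) (by positivity)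
        · exact lazyKernel_le_inv_sqrt B (a - b)
        · exact mul_nonneg (hr B (a - b)) (by positivity)
        · exact lazyKernel_le_inv_sqrt A b
    _ = 32 * ((√(B + 1))⁻¹ * ∑ b ∈ Icc (-(A : ℤ)) A, lazyKernel A b * (b : ℝ) ^ 6 +
          (√(A + 1))⁻¹ * ∑ b ∈ Icc (-(A : ℤ)) A,
            lazyKernel B (a - b) * ((a - b : ℤ) : ℝ) ^ 6) := by
        rw [← mul_sum, sum_add_distrib, ← sum_mul, ← mul_sum, mul_comm (∑ _ ∈ _, _)]
    _ ≤ 32 * ((√(B + 1))⁻¹ * (8 * A ^ 3) + (√(B + 1))⁻¹ * (8 * A ^ 3)) := by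
        have hfar0 : 0 ≤ ∑ b ∈ Icc (-(A : ℤ)) A,
            lazyKernel B (a - b) * ((a - b : ℤ) : ℝ) ^ 6 :=
          sum_nonneg fun b _ => mul_nonneg (hr B (a - b)) (by positivity)
        refine mul_le_mul_of_nonneg_left (add_le_add ?_ ?_) (by norm_num)
        · exact mul_le_mul_of_nonneg_left (sum_lazyKernel_mul_pow_six_le A) (by positivity)
        · exact mul_le_mul hsqrtA (hfar.trans (by gcongr)) hfar0 (by positivity)
    _ ≤ 32 * (2 / √(↑(A + B) + 1) * (8 * ↑(A + B) ^ 3) +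
          2 / √(↑(A + B) + 1) * (8 * ↑(A + B) ^ 3)) := by gcongr
    _ = 1024 * ↑(A + B) ^ 3 / √(↑(A + B) + 1) := by ring

/-- `65536 = 64 · 1024` comes from `|a| ≥ |k| n / 2` and `lazyKernel_mul_pow_six_le`; the
`k = 0` term of the series is `1 / 0 = 0`. -/
noncomputable def liftConst : ℝ := 65536 * ∑' k : ℤ, 1 / (k : ℝ) ^ 6

lemma liftConst_nonneg : 0 ≤ liftConst := by
  rw [liftConst]; positivity

/-- The other lifts of `v` are `v + k n` with `k ≠ 0`, at distance `≳ |k| n` from the origin. -/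
lemma sum_lazyKernel_le_of_modEq {n : ℕ} (hn : 0 < n) {v : ℤ} (hv : 2 * |v| ≤ n) (N : ℕ)
    {s : Finset ℤ} (hs : ∀ a ∈ s, a ≠ v ∧ (a : ZMod n) = v) :
    ∑ a ∈ s, lazyKernel N a ≤
      liftConst * N ^ 3 / (√(N + 1) * n ^ 6) := by
  set K : ℤ → ℤ := fun a => (a - v) / n
  have hK : ∀ a ∈ s, a - v = n * K a := fun a ha =>
    (Int.mul_ediv_cancel' ((ZMod.intCast_eq_intCast_iff _ _ _).mp (hs a ha).2).symm.dvd).symm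
  have hpoint : ∀ a ∈ s,
      lazyKernel N a ≤ 65536 * N ^ 3 / (√(N + 1) * n ^ 6) * (1 / (K a : ℝ) ^ 6) := by
    intro a ha
    have hk0 : (K a : ℝ) ≠ 0 := by
      have := hK a ha
      exact_mod_cast fun h => (hs a ha).1 (by rw [h, mul_zero] at this; omega)
    have hnR : (0 : ℝ) < n := by exact_mod_cast hn
    have hk1 : 1 ≤ |(K a : ℝ)| := by
      rw [← Int.cast_abs]; exact_mod_cast Int.one_le_abs (by exact_mod_cast hk0)
    have hdist : |(K a : ℝ)| * n ≤ 2 * |(a : ℝ)| := by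
      have hav : (a : ℝ) - v = n * K a := by exact_mod_cast hK a ha
      have hvR : 2 * |(v : ℝ)| ≤ n := by rw [← Int.cast_abs]; exact_mod_cast hv
      have h1 : |(K a : ℝ)| * n = |(a : ℝ) - v| := by rw [hav, abs_mul, abs_of_pos hnR, mul_comm]
      have h2 := abs_sub (a : ℝ) v
      nlinarith [mul_le_mul_of_nonneg_right hk1 hnR.le]
    have h6 : ((K a : ℝ) * n) ^ 6 ≤ 64 * (a : ℝ) ^ 6 := by
      rw [← Even.pow_abs ⟨3, rfl⟩, ← Even.pow_abs ⟨3, rfl⟩ (a : ℝ), abs_mul, abs_of_pos hnR]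
      calc (|(K a : ℝ)| * n) ^ 6 ≤ (2 * |(a : ℝ)|) ^ 6 := by gcongr
        _ = 64 * |(a : ℝ)| ^ 6 := by ring
    have hmain := lazyKernel_mul_pow_six_le N a
    rw [mul_one_div, le_div_iff₀ (Even.pow_pos ⟨3, rfl⟩ hk0), le_div_iff₀ (by positivity)]
    calc lazyKernel N a * (K a : ℝ) ^ 6 * (√(N + 1) * n ^ 6)
        = √(N + 1) * (lazyKernel N a * ((K a : ℝ) * n) ^ 6) := by ring
      _ ≤ √(N + 1) * (lazyKernel N a * (64 * (a : ℝ) ^ 6)) := by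
        gcongr; exact lazyKernel_nonneg N a
      _ = 64 * (√(N + 1) * (lazyKernel N a * (a : ℝ) ^ 6)) := by ring
      _ ≤ 64 * (√(N + 1) * (1024 * N ^ 3 / √(N + 1))) := by gcongr
      _ = 65536 * N ^ 3 := by field_simp; ring
  have hinj : Set.InjOn K s := fun a ha b hb h => by
    have h1 := hK a ha; have h2 := hK b hb; rw [h] at h1; linarith
  calc ∑ a ∈ s, lazyKernel N a
      ≤ 65536 * N ^ 3 / (√(N + 1) * n ^ 6) * ∑ a ∈ s, 1 / (K a : ℝ) ^ 6 := by
        rw [mul_sum]; exact sum_le_sum hpoint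
    _ = 65536 * N ^ 3 / (√(N + 1) * n ^ 6) * ∑ k ∈ s.image K, 1 / (k : ℝ) ^ 6 := by
        rw [sum_image hinj]
    _ ≤ 65536 * N ^ 3 / (√(N + 1) * n ^ 6) * ∑' k : ℤ, 1 / (k : ℝ) ^ 6 := by
        gcongr
        exact (Real.summable_one_div_int_pow.mpr (by norm_num)).sum_le_tsum _
          fun k _ => by positivity
    _ = liftConst * N ^ 3 / (√(N + 1) * n ^ 6) := by rw [liftConst]; ring

/-! ### The lazy walk on `ℤ⁴` -/

lemma unitVec_ne_zero (i : Fin 4) : unitVec i ≠ 0 := fun h => by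
  simpa [unitVec] using congrFun h i

lemma unitVec_injective : Function.Injective unitVec := fun i j h => by
  by_contra hij; simpa [unitVec, hij] using congrFun h i

lemma unitVec_ne_neg_unitVec (i j : Fin 4) : unitVec i ≠ -unitVec j := fun h => by
  have := congrFun h i
  by_cases hij : i = j <;> simp [unitVec, hij] at this

lemma stepProb_eq (d : Fin 4 → ℤ) :
    stepProb d = (if d = 0 then 1 / 2 else 0) +
      ∑ i, ((if d = unitVec i then 1 / 16 else 0) + (if d = -unitVec i then 1 / 16 else 0)) := by
  by_cases h0 : d = 0
  · subst h0
    simp [stepProb, eq_comm (a := (0 : Fin 4 → ℤ)), unitVec_ne_zero, neg_eq_zero]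
  rw [stepProb, if_neg h0, if_neg h0, zero_add]
  split_ifs with hd
  · obtain ⟨i, rfl | rfl⟩ := hd
    · simp [unitVec_injective.eq_iff, unitVec_ne_neg_unitVec]
    · simp [unitVec_injective.eq_iff, (unitVec_ne_neg_unitVec _ _).symm]
  · push Not at hd
    simp [hd]

lemma latticeQ_succ (t : ℕ) (z : Fin 4 → ℤ) :
    latticeQ (t + 1) z = latticeQ t z * (1 / 2) +
      ∑ i, (latticeQ t (z - unitVec i) * (1 / 16) + latticeQ t (z + unitVec i) * (1 / 16)) := by
  have hsub : ∀ y v : Fin 4 → ℤ, z - y = v ↔ y = z - v := fun y v => by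
    constructor <;> rintro rfl <;> abel
  show ∑' y, latticeQ t y * stepProb (z - y) = _
  simp only [stepProb_eq, mul_add, Finset.mul_sum, mul_ite, mul_zero, hsub]
  rw [ENNReal.tsum_add, Summable.tsum_finsetSum fun i _ => ENNReal.summable]
  simp only [ENNReal.tsum_add, tsum_ite_eq, sub_zero, sub_neg_eq_add]

/-- `c k` is the coordinate moved at step `k`. -/
noncomputable def latticeQReal (t : ℕ) (z : Fin 4 → ℤ) : ℝ :=
  (∑ c : Fin t → Fin 4, ∏ i, lazyKernel (coordCount c i) (z i)) / 4 ^ t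

lemma latticeQReal_nonneg (t : ℕ) (z : Fin 4 → ℤ) : 0 ≤ latticeQReal t z :=
  div_nonneg (sum_nonneg fun _ _ => prod_nonneg fun _ _ => lazyKernel_nonneg _ _) (by positivity)

lemma latticeQReal_zero (z : Fin 4 → ℤ) : latticeQReal 0 z = if z = 0 then 1 else 0 := by
  simp only [latticeQReal, coordCount, univ_eq_empty, filter_empty, card_empty, lazyKernel_zero,
    pow_zero, div_one, Fintype.sum_unique, prod_ite_zero, prod_const_one, funext_iff,
    Pi.zero_apply, mem_univ, true_implies]

lemma sub_unitVec_eq_update (z : Fin 4 → ℤ) (k : Fin 4) :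
    z - unitVec k = Function.update z k (z k - 1) := by
  funext j; by_cases h : j = k <;> simp [unitVec, h]

lemma add_unitVec_eq_update (z : Fin 4 → ℤ) (k : Fin 4) :
    z + unitVec k = Function.update z k (z k + 1) := by
  funext j; by_cases h : j = k <;> simp [unitVec, h]

lemma prod_lazyKernel_coordCount_cons (k : Fin 4) {t : ℕ} (c : Fin t → Fin 4)
    (z : Fin 4 → ℤ) :
    ∏ i, lazyKernel (coordCount (Fin.cons k c : Fin (t + 1) → Fin 4) i) (z i) =
      (∏ i, lazyKernel (coordCount c i) (z i)) / 2 +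
      (∏ i, lazyKernel (coordCount c i) ((z - unitVec k) i)) / 4 +
      (∏ i, lazyKernel (coordCount c i) ((z + unitVec k) i)) / 4 := by
  have hupd : ∀ (m : Fin 4 → ℕ) (v : Fin 4 → ℤ),
      ∏ i, lazyKernel (m i) (v i) =
        lazyKernel (m k) (v k) * ∏ i ∈ univ.erase k, lazyKernel (m i) (v i) :=
    fun m v => (mul_prod_erase _ _ (mem_univ k)).symm
  have hrest : ∀ (m m' : Fin 4 → ℕ) (v v' : Fin 4 → ℤ), (∀ i ≠ k, m' i = m i) →
      (∀ i ≠ k, v' i = v i) →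
        ∏ i ∈ univ.erase k, lazyKernel (m' i) (v' i) = ∏ i ∈ univ.erase k, lazyKernel (m i) (v i) :=
    fun m m' v v' hm hv => prod_congr rfl fun i hi => by
      rw [hm i (ne_of_mem_erase hi), hv i (ne_of_mem_erase hi)]
  have hm := hrest (coordCount c) (Function.update (coordCount c) k (coordCount c k + 1)) z z
    (fun i hi => Function.update_of_ne hi _ _) fun _ _ => rfl
  have hv := fun a => hrest (coordCount c) (coordCount c) z (Function.update z k a)
    (fun _ _ => rfl) fun i hi => Function.update_of_ne hi _ _
  rw [coordCount_cons, sub_unitVec_eq_update, add_unitVec_eq_update, hupd, hm, hupd (coordCount c),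
    hupd _ (Function.update z k _), hv, hupd _ (Function.update z k _), hv]
  simp only [Function.update_self, lazyKernel_succ]
  ring

lemma latticeQReal_succ (t : ℕ) (z : Fin 4 → ℤ) :
    latticeQReal (t + 1) z = latticeQReal t z * (1 / 2) +
      ∑ i, (latticeQReal t (z - unitVec i) * (1 / 16) +
        latticeQReal t (z + unitVec i) * (1 / 16)) := by
  have hcons : ∀ F : (Fin (t + 1) → Fin 4) → ℝ,
      ∑ c, F c = ∑ k : Fin 4, ∑ c : Fin t → Fin 4, F (Fin.cons k c) := fun F => by
    rw [← (Fin.consEquiv fun _ => Fin 4).sum_comp, Fintype.sum_prod_type]; rfl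
  simp only [latticeQReal, hcons, prod_lazyKernel_coordCount_cons, sum_add_distrib, ← sum_div,
    sum_const, card_univ, Fintype.card_fin, nsmul_eq_mul, pow_succ]
  simp only [← sum_mul]
  rw [← sum_div, ← sum_div]
  push_cast
  ring

lemma latticeQ_eq_ofReal (t : ℕ) (z : Fin 4 → ℤ) :
    latticeQ t z = ENNReal.ofReal (latticeQReal t z) := by
  induction t generalizing z with
  | zero => rw [latticeQReal_zero]; split_ifs <;> simp [latticeQ, *]
  | succ t ih =>
    have hterm : ∀ v (c : ℝ),
        ENNReal.ofReal (latticeQReal t v * c) = latticeQ t v * ENNReal.ofReal c :=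
      fun v c => by rw [ENNReal.ofReal_mul (latticeQReal_nonneg t v), ih]
    have hnn : ∀ v, 0 ≤ latticeQReal t v * (1 / 16) :=
      fun v => mul_nonneg (latticeQReal_nonneg t v) (by norm_num)
    rw [latticeQ_succ, latticeQReal_succ, ENNReal.ofReal_add
      (mul_nonneg (latticeQReal_nonneg t z) (by norm_num))
      (sum_nonneg fun i _ => add_nonneg (hnn _) (hnn _)),
      ENNReal.ofReal_sum_of_nonneg fun i _ => add_nonneg (hnn _) (hnn _)]
    simp only [ENNReal.ofReal_add (hnn _) (hnn _), hterm]
    norm_num [ENNReal.ofReal_div_of_pos]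

lemma latticeQReal_eq_zero_of_lt_abs {t : ℕ} {z : Fin 4 → ℤ} {i : Fin 4} (h : (t : ℤ) < |z i|) :
    latticeQReal t z = 0 := by
  rw [latticeQReal, sum_eq_zero fun c _ => prod_eq_zero (mem_univ i) <|
    lazyKernel_eq_zero_of_lt_abs <| lt_of_le_of_lt (by exact_mod_cast coordCount_le c i) h,
    zero_div]

/-! ### Multinomial averages -/

lemma inv_natCast_add_one_eq_integral (a : ℕ) : ((a : ℝ) + 1)⁻¹ = ∫ y in (0 : ℝ)..1, y ^ a := by
  simp [integral_pow]

lemma sum_pow_coordCount_mul_pow_coordCount {i j : Fin 4} (hij : i ≠ j) (t : ℕ) (x y : ℝ) :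
    ∑ c : Fin t → Fin 4, x ^ coordCount c i * y ^ coordCount c j = (x + y + 2) ^ t := by
  set w : Fin 4 → ℝ := fun m => 1 + (if m = i then x - 1 else 0) + (if m = j then y - 1 else 0)
  have hpow : ∀ c : Fin t → Fin 4,
      ∏ m, w m ^ coordCount c m = x ^ coordCount c i * y ^ coordCount c j := by
    intro c
    have : ∀ m, w m ^ coordCount c m =
        (if m = i then x ^ coordCount c i else 1) * (if m = j then y ^ coordCount c j else 1) := by
      intro m
      by_cases hi : m = i <;> by_cases hj : m = j <;> simp_all [w]
    simp only [this, prod_mul_distrib, Fintype.prod_ite_eq']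
  have hsum : ∑ m, w m = x + y + 2 := by
    simp only [w, sum_add_distrib, Fintype.sum_ite_eq', sum_const, card_univ, Fintype.card_fin]
    ring
  rw [← hsum, ← sum_prod_pow_coordCount]
  exact sum_congr rfl fun c _ => (hpow c).symm

/-- Integrating `∑_c x ^ Nᵢ y ^ Nⱼ = (x + y + 2) ^ t` over the unit square. -/
lemma sum_inv_coordCount_add_one_mul_le {i j : Fin 4} (hij : i ≠ j) (t : ℕ) :
    ∑ c : Fin t → Fin 4, (((coordCount c i : ℝ) + 1) * ((coordCount c j : ℝ) + 1))⁻¹ ≤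
      16 * 4 ^ t / ((t + 1) * (t + 2)) := by
  have hinner : ∀ x : ℝ, ∑ c : Fin t → Fin 4, x ^ coordCount c i * ((coordCount c j : ℝ) + 1)⁻¹ =
      ((x + 3) ^ (t + 1) - (x + 2) ^ (t + 1)) / (t + 1) := by
    intro x
    simp only [inv_natCast_add_one_eq_integral, ← intervalIntegral.integral_const_mul]
    rw [← intervalIntegral.integral_finsetSum fun c _ =>
      Continuous.intervalIntegrable (by fun_prop) _ _]
    simp only [sum_pow_coordCount_mul_pow_coordCount hij,
      show ∀ y, x + y + 2 = y + (x + 2) from fun y => by ring]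
    rw [intervalIntegral.integral_comp_add_right (· ^ t), integral_pow]
    ring_nf
  have houter : ∑ c : Fin t → Fin 4, (((coordCount c i : ℝ) + 1) * ((coordCount c j : ℝ) + 1))⁻¹ =
      ∫ x in (0 : ℝ)..1, ((x + 3) ^ (t + 1) - (x + 2) ^ (t + 1)) / (t + 1) := by
    simp only [mul_inv, inv_natCast_add_one_eq_integral (coordCount _ i),
      ← intervalIntegral.integral_mul_const]
    rw [← intervalIntegral.integral_finsetSum fun c _ =>
      Continuous.intervalIntegrable (by fun_prop) _ _]
    simp only [hinner]
  rw [houter]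
  calc ∫ x in (0 : ℝ)..1, ((x + 3) ^ (t + 1) - (x + 2) ^ (t + 1)) / (t + 1)
      ≤ ∫ x in (0 : ℝ)..1, (x + 3) ^ (t + 1) / (t + 1) := by
        refine intervalIntegral.integral_mono_on zero_le_one
          (Continuous.intervalIntegrable (by fun_prop) _ _)
          (Continuous.intervalIntegrable (by fun_prop) _ _) fun x hx => ?_
        have : 0 ≤ x + 2 := by linarith [hx.1]
        gcongr
        linarith [pow_nonneg this (t + 1)]
    _ = (4 ^ (t + 2) - 3 ^ (t + 2)) / ((t + 1) * (t + 2)) := by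
        rw [intervalIntegral.integral_div, intervalIntegral.integral_comp_add_right (· ^ (t + 1)),
          integral_pow]
        push_cast
        field_simp
        ring
    _ ≤ 16 * 4 ^ t / ((t + 1) * (t + 2)) := by
        gcongr
        rw [pow_add]
        linarith [pow_nonneg (zero_le_three : (0 : ℝ) ≤ 3) (t + 2)]

lemma sum_prod_inv_sqrt_coordCount_le (t : ℕ) :
    ∑ c : Fin t → Fin 4, ∏ i, (√((coordCount c i : ℝ) + 1))⁻¹ ≤
      16 * 4 ^ t / ((t + 1) * (t + 2)) := by
  have hsq : ∀ c : Fin t → Fin 4, ∀ i j, ((√((coordCount c i : ℝ) + 1))⁻¹ *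
      (√((coordCount c j : ℝ) + 1))⁻¹) ^ 2 =
        (((coordCount c i : ℝ) + 1) * ((coordCount c j : ℝ) + 1))⁻¹ := fun c i j => by
    rw [mul_pow, inv_pow, inv_pow, Real.sq_sqrt (by positivity), Real.sq_sqrt (by positivity),
      mul_inv]
  have amgm : ∀ a b : ℝ, a * b ≤ (a ^ 2 + b ^ 2) / 2 := fun a b => by
    linarith [two_mul_le_add_sq a b]
  calc ∑ c : Fin t → Fin 4, ∏ i, (√((coordCount c i : ℝ) + 1))⁻¹
      ≤ ∑ c : Fin t → Fin 4, ((((coordCount c 0 : ℝ) + 1) * ((coordCount c 1 : ℝ) + 1))⁻¹ +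
          (((coordCount c 2 : ℝ) + 1) * ((coordCount c 3 : ℝ) + 1))⁻¹) / 2 := by
        refine sum_le_sum fun c _ => ?_
        rw [Fin.prod_univ_four, ← hsq, ← hsq, mul_assoc _ _ (√_)⁻¹]
        exact amgm _ _
    _ ≤ (16 * 4 ^ t / ((t + 1) * (t + 2)) + 16 * 4 ^ t / ((t + 1) * (t + 2))) / 2 := by
        rw [← sum_div, sum_add_distrib]
        gcongr
        · exact sum_inv_coordCount_add_one_mul_le (by decide) t
        · exact sum_inv_coordCount_add_one_mul_le (by decide) t
    _ = 16 * 4 ^ t / ((t + 1) * (t + 2)) := by ring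

/-! ### Lifting from the torus -/

lemma torusProj_sub (n : ℕ) (x y : Fin 4 → ℤ) :
    torusProj n (y - x) = torusProj n y - torusProj n x := by
  funext i; simp [torusProj]

lemma torusProj_zero (n : ℕ) : torusProj n 0 = 0 := by
  funext i; simp [torusProj]

lemma lq_le_tp (t n : ℕ) (x y : Fin 4 → ℤ) :
    lq t x y ≤ tp t n (torusProj n x) (torusProj n y) := by
  have h := ENNReal.le_tsum (f := fun z => if torusProj n z = torusProj n y - torusProj n x
    then latticeQ t z else 0) (y - x)
  rwa [if_pos (torusProj_sub n x y)] at h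

noncomputable def residueLifts (n t : ℕ) (v : ℤ) : Finset ℤ :=
  (Icc (-(t : ℤ)) t).filter fun a => (a : ZMod n) = v

@[simp]
lemma mem_residueLifts {n t : ℕ} {v a : ℤ} :
    a ∈ residueLifts n t v ↔ (-(t : ℤ) ≤ a ∧ a ≤ t) ∧ (a : ZMod n) = v := by
  rw [residueLifts, mem_filter, mem_Icc]

lemma tp_torusProj_eq_ofReal (t n : ℕ) (x y : Fin 4 → ℤ) :
    tp t n (torusProj n x) (torusProj n y) = ENNReal.ofReal ((∑ c : Fin t → Fin 4, ∏ i,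
      ∑ a ∈ residueLifts n t ((y - x) i),
        lazyKernel (coordCount c i) a) / 4 ^ t) := by
  set fiber : Fin 4 → Finset ℤ :=
    fun i => residueLifts n t ((y - x) i)
  have hsupp : ∀ z ∉ Fintype.piFinset fiber,
      (if torusProj n z = torusProj n y - torusProj n x then latticeQ t z else 0) = 0 := by
    intro z hz
    rw [← torusProj_sub]
    split_ifs with hproj
    · obtain ⟨i, hi⟩ := not_forall.mp (mt Fintype.mem_piFinset.mpr hz)
      rw [latticeQ_eq_ofReal, latticeQReal_eq_zero_of_lt_abs (i := i), ENNReal.ofReal_zero]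
      have hzi : (z i : ZMod n) = ((y - x) i : ℤ) := congrFun hproj i
      simp only [fiber, mem_residueLifts, hzi, and_true] at hi
      rw [lt_abs]; omega
    · rfl
  have hfilter : (Fintype.piFinset fiber).filter
      (fun z => torusProj n z = torusProj n y - torusProj n x) = Fintype.piFinset fiber := by
    refine filter_true_of_mem fun z hz => ?_
    rw [← torusProj_sub]
    funext i
    exact (mem_residueLifts.mp (Fintype.mem_piFinset.mp hz i)).2
  rw [tp, tsum_eq_sum hsupp, ← sum_filter, hfilter]
  simp only [latticeQ_eq_ofReal]
  rw [← ENNReal.ofReal_sum_of_nonneg fun z _ => latticeQReal_nonneg t z]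
  simp only [latticeQReal, ← sum_div, prod_univ_sum]
  rw [sum_comm]

lemma prod_sum_fiber_lazyKernel_le {n : ℕ} (hn : 0 < n) {v : Fin 4 → ℤ}
    (hv : ∀ i, 2 * |v i| ≤ n) {t : ℕ} {β : ℝ}
    (hβ : liftConst * t ^ 3 / n ^ 6 ≤ β) (c : Fin t → Fin 4) :
    ∏ i, ∑ a ∈ residueLifts n t (v i),
        lazyKernel (coordCount c i) a ≤
      ∏ i, lazyKernel (coordCount c i) (v i) +
        4 * β * (1 + β) ^ 4 * ∏ i, (√((coordCount c i : ℝ) + 1))⁻¹ := by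
  set fiber := fun i => residueLifts n t (v i)
  set N := coordCount c
  set w : Fin 4 → ℝ := fun i => (√((N i : ℝ) + 1))⁻¹
  have hβ0 : 0 ≤ β := le_trans (by have := liftConst_nonneg; positivity) hβ
  have hw : ∀ i, 0 ≤ w i := fun i => by positivity
  have hN : ∀ i, (N i : ℝ) ≤ t := fun i => by exact_mod_cast coordCount_le c i
  have hsplit : ∀ i, ∑ a ∈ fiber i, lazyKernel (N i) a =
      lazyKernel (N i) (v i) + ∑ a ∈ (fiber i).erase (v i), lazyKernel (N i) a := by
    intro i
    by_cases hvi : v i ∈ fiber i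
    · exact (add_sum_erase _ _ hvi).symm
    · have : (N i : ℤ) < |v i| := by
        have : N i ≤ t := coordCount_le c i
        simp only [fiber, mem_residueLifts, and_true, not_and_or, not_le] at hvi
        rw [lt_abs]; omega
      rw [erase_eq_of_notMem hvi, lazyKernel_eq_zero_of_lt_abs this, zero_add]
  have htail : ∀ i, ∑ a ∈ (fiber i).erase (v i), lazyKernel (N i) a ≤ β * w i := by
    intro i
    refine (sum_lazyKernel_le_of_modEq hn (hv i) (N i) fun a ha => ?_).trans ?_
    · exact ⟨ne_of_mem_erase ha, (mem_residueLifts.mp (mem_of_mem_erase ha)).2⟩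
    · rw [show ∀ L : ℝ, L * N i ^ 3 / (√(N i + 1) * n ^ 6) = L * N i ^ 3 / n ^ 6 * w i by
        intro L; simp only [w]; ring]
      refine mul_le_mul_of_nonneg_right (le_trans ?_ hβ) (hw i)
      have := hN i
      have := liftConst_nonneg
      gcongr
  have hR : ∀ i, lazyKernel (N i) (v i) ≤ w i := fun i => lazyKernel_le_inv_sqrt _ _
  have hT0 : ∀ i, 0 ≤ ∑ a ∈ (fiber i).erase (v i), lazyKernel (N i) a :=
    fun i => sum_nonneg fun a _ => lazyKernel_nonneg _ _
  calc ∏ i, ∑ a ∈ fiber i, lazyKernel (N i) a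
      = ∏ i, (lazyKernel (N i) (v i) + ∑ a ∈ (fiber i).erase (v i), lazyKernel (N i) a) := by
        simp only [hsplit]
    _ ≤ ∏ i, lazyKernel (N i) (v i) + #(univ : Finset (Fin 4)) * β * ∏ i, ((1 + β) * w i) := by
        refine prod_add_le_prod_add_card_mul _ hβ0 (fun i _ => lazyKernel_nonneg _ _)
          (fun i _ => hT0 i) (fun i _ => ?_) fun i _ => ?_
        · linarith [hR i, htail i, mul_le_mul_of_nonneg_right hβ0 (hw i)]
        · nlinarith [htail i, mul_nonneg (mul_nonneg hβ0 hβ0) (hw i)]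
    _ = ∏ i, lazyKernel (N i) (v i) + 4 * β * (1 + β) ^ 4 * ∏ i, w i := by
        rw [prod_mul_distrib, prod_const, card_univ, Fintype.card_fin]
        push_cast
        ring

lemma sum_prod_sum_fiber_lazyKernel_le {n : ℕ} (hn : 0 < n) {v : Fin 4 → ℤ}
    (hv : ∀ i, 2 * |v i| ≤ n) {t : ℕ} {β : ℝ}
    (hβ : liftConst * t ^ 3 / n ^ 6 ≤ β) :
    (∑ c : Fin t → Fin 4, ∏ i, ∑ a ∈ residueLifts n t (v i),
        lazyKernel (coordCount c i) a) / 4 ^ t ≤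
      latticeQReal t v + 64 * β * (1 + β) ^ 4 / ((t + 1) * (t + 2)) := by
  have hβ0 : 0 ≤ β := le_trans (by have := liftConst_nonneg; positivity) hβ
  calc (∑ c : Fin t → Fin 4, ∏ i, ∑ a ∈ residueLifts n t (v i),
        lazyKernel (coordCount c i) a) / 4 ^ t
      ≤ (∑ c : Fin t → Fin 4, (∏ i, lazyKernel (coordCount c i) (v i) +
          4 * β * (1 + β) ^ 4 * ∏ i, (√((coordCount c i : ℝ) + 1))⁻¹)) / 4 ^ t := by
        gcongr with c
        exact prod_sum_fiber_lazyKernel_le hn hv hβ c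
    _ ≤ latticeQReal t v + 4 * β * (1 + β) ^ 4 * (16 * 4 ^ t / ((t + 1) * (t + 2))) / 4 ^ t := by
        rw [sum_add_distrib, ← mul_sum, add_div, latticeQReal]
        gcongr
        exact sum_prod_inv_sqrt_coordCount_le t
    _ = latticeQReal t v + 64 * β * (1 + β) ^ 4 / ((t + 1) * (t + 2)) := by
        field_simp
        ring

lemma wrapError_le {L C' : ℝ} (hL : 0 ≤ L) {n t : ℕ} (hn : 0 < n)
    (ht : (t : ℝ) ≤ C' * n ^ 2) :
    64 * (L * t ^ 3 / n ^ 6) * (1 + L * t ^ 3 / n ^ 6) ^ 4 / ((t + 1) * (t + 2)) ≤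
      64 * L * C' * (1 + L * C' ^ 3) ^ 4 / n ^ 4 := by
  have hnR : (0 : ℝ) < n := by exact_mod_cast hn
  have hC' : 0 ≤ C' := nonneg_of_mul_nonneg_left ((Nat.cast_nonneg t).trans ht) (by positivity)
  have hβ : L * t ^ 3 / n ^ 6 ≤ L * C' ^ 3 := by
    rw [div_le_iff₀ (by positivity), mul_assoc]
    gcongr
    calc (t : ℝ) ^ 3 ≤ (C' * n ^ 2) ^ 3 := by gcongr
      _ = C' ^ 3 * n ^ 6 := by ring
  have hdecay : L * t ^ 3 / n ^ 6 / ((t + 1) * (t + 2)) ≤ L * C' / n ^ 4 := by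
    rw [div_div, div_le_div_iff₀ (by positivity) (by positivity), mul_assoc L, mul_assoc L]
    refine mul_le_mul_of_nonneg_left ?_ hL
    have ht0 : (0 : ℝ) ≤ t := Nat.cast_nonneg t
    calc (t : ℝ) ^ 3 * n ^ 4 ≤ (t * n ^ 4) * ((t + 1) * (t + 2)) := by
          have : (t : ℝ) ^ 2 ≤ (t + 1) * (t + 2) := by nlinarith
          nlinarith [mul_le_mul_of_nonneg_left this (by positivity : (0 : ℝ) ≤ t * n ^ 4)]
      _ ≤ (C' * n ^ 2 * n ^ 4) * ((t + 1) * (t + 2)) := by gcongr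
      _ = C' * (n ^ 6 * ((t + 1) * (t + 2))) := by ring
  calc 64 * (L * t ^ 3 / n ^ 6) * (1 + L * t ^ 3 / n ^ 6) ^ 4 / ((t + 1) * (t + 2))
      = 64 * (L * t ^ 3 / n ^ 6 / ((t + 1) * (t + 2))) * (1 + L * t ^ 3 / n ^ 6) ^ 4 := by ring
    _ ≤ 64 * (L * C' / n ^ 4) * (1 + L * C' ^ 3) ^ 4 := by gcongr
    _ = 64 * L * C' * (1 + L * C' ^ 3) ^ 4 / n ^ 4 := by ring

theorem statement2_general (C' : ℝ) :
    ∃ C : ℝ, ∀ n : ℕ, 2 ≤ n → ∀ x : Fin 4 → ℤ,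
      (∀ i, 2 * |x i| ≤ (n : ℤ)) → ∀ t : ℕ, (t : ℝ) ≤ C' * (n : ℝ) ^ 2 →
        lq t x 0 ≤ tp t n (torusProj n x) 0 ∧
        tp t n (torusProj n x) 0 ≤ lq t x 0 + ENNReal.ofReal C / (n : ℝ≥0∞) ^ 4 := by
  refine ⟨64 * liftConst * C' * (1 + liftConst * C' ^ 3) ^ 4, fun n hn x hx t ht => ?_⟩
  rw [← torusProj_zero n]
  refine ⟨lq_le_tp t n x 0, ?_⟩
  have hn0 : 0 < n := by omega
  have hv : ∀ i, 2 * |(0 - x) i| ≤ n := by simpa using hx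
  have hest := (sum_prod_sum_fiber_lazyKernel_le hn0 hv le_rfl).trans
    (add_le_add le_rfl (wrapError_le liftConst_nonneg hn0 ht))
  rw [tp_torusProj_eq_ofReal, lq, latticeQ_eq_ofReal]
  refine ((ENNReal.ofReal_le_ofReal hest).trans ENNReal.ofReal_add_le).trans_eq ?_
  rw [ENNReal.ofReal_div_of_pos (by positivity), ENNReal.ofReal_pow (by positivity),
    ENNReal.ofReal_natCast]

/-- Comparison of transition probabilities on `ℤ⁴` and on the torus:
`q_t(x,0) ≤ p_{t,n}(x',0) ≤ q_t(x,0) + C/n⁴` for `t ≤ C' n²`. -/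
theorem statement2 (C' : ℝ) (hC' : 0 < C') :
    ∃ C : ℝ, ∀ n : ℕ, 2 ≤ n → ∀ x : Fin 4 → ℤ,
      (∀ i, 2 * |x i| ≤ (n : ℤ)) → ∀ t : ℕ, (t : ℝ) ≤ C' * (n : ℝ) ^ 2 →
        lq t x 0 ≤ tp t n (torusProj n x) 0 ∧
        tp t n (torusProj n x) 0 ≤ lq t x 0 + ENNReal.ofReal C / (n : ℝ≥0∞) ^ 4 :=
  statement2_general C'
end

section
/- Let L, M, d be nonnegative integers with d ≥ τ_n, and let f be a nonnegative function of a pair consisting of a path of length L+1 and a path of length M+1 in Z_n^4. Let (X_t)_{t≥0} and (Y_t)_{t≥0} be independent random walks on Z_n^4, where Y_0 is uniformly distributed on Z_n^4 (and X_0 has arbitrary distribution). Then E[f(X[0,L], X[L+d, L+M+d])] ≤ (3/2) E[f(X[0,L], Y[0,M])]. -/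
open MeasureTheory ProbabilityTheory Filter
open scoped ENNReal

/-!
Write `X_{L+d+j} = X_L + V + R_j` with `V = X_{L+d} - X_L` and `R` the path of increments after
time `L + d`. By the Markov property `X[0,L]`, `V` and `R` are independent; `V` has law
`p_{d,n}(0, ·) ≤ (3/2) n⁻⁴` once `d ≥ τ_n`, and `R` has the same law as `(Y_j - Y_0)_j`. As `Y_0`
is uniform and independent of `(Y_j - Y_0)_j` and of `X`, summing over the values of
`(X[0,L], V, R)` and substituting `y = X_L + V` gives the factor `3/2`.

The mixing time is finite because of the Doeblin bound `p_{4(n-1),n}(0, ·) ≥ 16^{-4(n-1)}`: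
convolving with such a kernel contracts the distance to the uniform distribution by a fixed factor.
-/

open Finset

namespace ProbabilityTheory

variable {Ω α β γ : Type*} [MeasurableSpace Ω] {μ : Measure Ω}
  [MeasurableSpace α] [MeasurableSpace β] [MeasurableSpace γ]

theorem iIndepFun.indepFun_comp_of_dependsOn {ι : Type*} [Countable β]
    [MeasurableSingletonClass β] [Nonempty α] [Nonempty γ] {f : ι → Ω → β}
    (hf : iIndepFun f μ) (hfm : ∀ i, Measurable (f i)) {S T : Finset ι} (hST : Disjoint S T)
    {F : (ι → β) → α} {G : (ι → β) → γ} (hF : DependsOn F S) (hG : DependsOn G T) :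
    IndepFun (fun ω ↦ F (f · ω)) (fun ω ↦ G (f · ω)) μ := by
  obtain ⟨F', rfl⟩ := dependsOn_iff_exists_comp.mp hF
  obtain ⟨G', rfl⟩ := dependsOn_iff_exists_comp.mp hG
  exact (hf.indepFun_finset S T hST hfm).comp .of_discrete .of_discrete

theorem IndepFun.prodMk_left_of_prodMk_right [IsProbabilityMeasure μ] {U : Ω → α} {V : Ω → β}
    {W : Ω → γ} (hU : Measurable U) (hV : Measurable V) (hW : Measurable W)
    (hUVW : IndepFun U (fun ω ↦ (V ω, W ω)) μ) (hVW : IndepFun V W μ) :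
    IndepFun (fun ω ↦ (U ω, V ω)) W μ := by
  have hUV : IndepFun U V μ := hUVW.comp measurable_id measurable_fst
  rw [indepFun_iff_map_prod_eq_prod_map_map (hU.prodMk hV).aemeasurable hW.aemeasurable,
    (indepFun_iff_map_prod_eq_prod_map_map hU.aemeasurable hV.aemeasurable).mp hUV]
  rw [indepFun_iff_map_prod_eq_prod_map_map hU.aemeasurable (hV.prodMk hW).aemeasurable,
    (indepFun_iff_map_prod_eq_prod_map_map hV.aemeasurable hW.aemeasurable).mp hVW,
    ← Measure.prodAssoc_prod] at hUVW
  have := congrArg (Measure.map MeasurableEquiv.prodAssoc.symm) hUVW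
  rwa [Measure.map_map MeasurableEquiv.prodAssoc.symm.measurable (hU.prodMk (hV.prodMk hW)),
    Measure.map_map MeasurableEquiv.prodAssoc.symm.measurable MeasurableEquiv.prodAssoc.measurable,
    MeasurableEquiv.symm_comp_self, Measure.map_id] at this

theorem IndepFun.measure_add_eq_tsum [AddCommGroup α] [Countable α] [MeasurableSingletonClass α]
    {U W : Ω → α} (h : IndepFun U W μ) (hU : Measurable U) (hW : Measurable W) (z : α) :
    μ {ω | U ω + W ω = z} = ∑' y, μ {ω | U ω = y} * μ {ω | W ω = z - y} := by
  have hunion : {ω | U ω + W ω = z} = ⋃ y, U ⁻¹' {y} ∩ W ⁻¹' {z - y} := by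
    ext ω
    simpa using eq_sub_iff_add_eq'.symm
  rw [hunion, measure_iUnion]
  · exact tsum_congr fun y ↦ h.measure_inter_preimage_eq_mul _ _ (.singleton y) (.singleton _)
  · exact fun y y' hyy' ↦ Disjoint.mono inf_le_left inf_le_left
      ((Set.disjoint_singleton.mpr hyy').preimage U)
  · exact fun y ↦ (hU (.singleton y)).inter (hW (.singleton _))

variable [Fintype α] [Fintype β] [Fintype γ]
  [MeasurableSingletonClass α] [MeasurableSingletonClass β] [MeasurableSingletonClass γ]

theorem lintegral_eq_sum_of_indepFun {A : Ω → α} {V : Ω → β} {R : Ω → γ}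
    (hA : Measurable A) (hV : Measurable V) (hR : Measurable R)
    (hAVR : IndepFun A (fun ω ↦ (V ω, R ω)) μ) (hVR : IndepFun V R μ) (g : α → β → γ → ℝ≥0∞) :
    ∫⁻ ω, g (A ω) (V ω) (R ω) ∂μ =
      ∑ a, ∑ v, ∑ r, g a v r * (μ (A ⁻¹' {a}) * μ (V ⁻¹' {v}) * μ (R ⁻¹' {r})) := by
  have hmeas : Measurable fun ω ↦ (A ω, (V ω, R ω)) := hA.prodMk (hV.prodMk hR)
  rw [← lintegral_map (f := fun p ↦ g p.1 p.2.1 p.2.2) .of_discrete hmeas, lintegral_fintype,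
    Fintype.sum_prod_type]
  refine sum_congr rfl fun a _ ↦ ?_
  rw [Fintype.sum_prod_type]
  refine sum_congr rfl fun v _ ↦ sum_congr rfl fun r _ ↦ ?_
  rw [Measure.map_apply hmeas (.singleton _), ← Set.singleton_prod_singleton,
    ← Set.singleton_prod_singleton, Set.mk_preimage_prod,
    hAVR.measure_inter_preimage_eq_mul _ _ (.singleton _) ((MeasurableSet.singleton v).prod
      (.singleton r)),
    Set.mk_preimage_prod, hVR.measure_inter_preimage_eq_mul _ _ (.singleton _) (.singleton _),
    mul_assoc]

theorem lintegral_comp_add_le_of_indepFun {G : Type*} [AddCommGroup G] [Fintype G]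
    [MeasurableSpace G] [MeasurableSingletonClass G] {A : Ω → α} {V U : Ω → G} {R R' : Ω → γ}
    (hA : Measurable A) (hV : Measurable V) (hR : Measurable R) (hU : Measurable U)
    (hR' : Measurable R') (hAVR : IndepFun A (fun ω ↦ (V ω, R ω)) μ) (hVR : IndepFun V R μ)
    (hAUR : IndepFun A (fun ω ↦ (U ω, R' ω)) μ) (hUR : IndepFun U R' μ)
    (hRR' : ∀ r, μ (R ⁻¹' {r}) = μ (R' ⁻¹' {r})) {c : ℝ≥0∞}
    (hVU : ∀ v u, μ (V ⁻¹' {v}) ≤ c * μ (U ⁻¹' {u})) (s : α → G) (g : α → G → γ → ℝ≥0∞) :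
    ∫⁻ ω, g (A ω) (s (A ω) + V ω) (R ω) ∂μ ≤ c * ∫⁻ ω, g (A ω) (U ω) (R' ω) ∂μ := by
  rw [lintegral_eq_sum_of_indepFun hA hV hR hAVR hVR (fun a v r ↦ g a (s a + v) r),
    lintegral_eq_sum_of_indepFun hA hU hR' hAUR hUR, mul_sum]
  refine sum_le_sum fun a _ ↦ ?_
  calc ∑ v, ∑ r, g a (s a + v) r * (μ (A ⁻¹' {a}) * μ (V ⁻¹' {v}) * μ (R ⁻¹' {r}))
      ≤ ∑ v, ∑ r, c * (g a (s a + v) r *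
          (μ (A ⁻¹' {a}) * μ (U ⁻¹' {s a + v}) * μ (R' ⁻¹' {r}))) := by
        refine sum_le_sum fun v _ ↦ sum_le_sum fun r _ ↦ ?_
        rw [hRR']
        calc _ ≤ g a (s a + v) r *
              (μ (A ⁻¹' {a}) * (c * μ (U ⁻¹' {s a + v})) * μ (R' ⁻¹' {r})) := by
              gcongr; exact hVU _ _
          _ = _ := by ring
    _ = c * ∑ u, ∑ r, g a u r * (μ (A ⁻¹' {a}) * μ (U ⁻¹' {u}) * μ (R' ⁻¹' {r})) := by
        rw [mul_sum]
        exact Fintype.sum_equiv (Equiv.addLeft (s a)) _ _ fun v ↦ by simp [mul_sum]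

end ProbabilityTheory

section ConvolutionMixing

variable {G : Type*} [AddCommGroup G] [Fintype G]

lemma abs_sum_mul_sub_inv_card_le {p q : G → ℝ} {δ ε : ℝ} (hp : ∑ u, p u = 1)
    (hq : ∑ u, q u = 1) (hqδ : ∀ u, δ ≤ q u) (hpε : ∀ u, |p u - (Fintype.card G : ℝ)⁻¹| ≤ ε)
    (v : G) :
    |∑ u, p u * q (v - u) - (Fintype.card G : ℝ)⁻¹| ≤ ε * (1 - Fintype.card G * δ) := by
  set θ := (Fintype.card G : ℝ)⁻¹
  have hθ : (Fintype.card G : ℝ) * θ = 1 := mul_inv_cancel₀ (by positivity)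
  have hq' : ∑ u, q (v - u) = 1 := hq ▸ Fintype.sum_equiv (Equiv.subLeft v) _ _ fun _ ↦ rfl
  have hδ : ∑ u, (q (v - u) - δ) = 1 - Fintype.card G * δ := by
    rw [sum_sub_distrib, hq', sum_const, card_univ, nsmul_eq_mul]
  -- as `∑ u, (p u - θ) = 0`, the part `δ` that `q` puts everywhere does not contribute
  have hdecomp : ∑ u, p u * q (v - u) - θ = ∑ u, (p u - θ) * (q (v - u) - δ) := by
    simp only [sub_mul, mul_sub, sum_sub_distrib, ← sum_mul, ← mul_sum, hp, hq', sum_const,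
      card_univ, nsmul_eq_mul]
    linear_combination -δ * hθ
  rw [hdecomp, ← hδ, mul_sum]
  refine (abs_sum_le_sum_abs _ _).trans (sum_le_sum fun u _ ↦ ?_)
  rw [abs_mul, abs_of_nonneg (sub_nonneg.mpr (hqδ _))]
  exact mul_le_mul_of_nonneg_right (hpε u) (sub_nonneg.mpr (hqδ _))

variable {p : ℕ → G → ℝ} (hp : ∀ t, ∑ u, p t u = 1) (hp0 : ∀ t u, 0 ≤ p t u)
  (hadd : ∀ s t v, p (s + t) v = ∑ u, p s u * p t (v - u))
include hp hp0 hadd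

lemma abs_sub_inv_card_le_succ {t : ℕ} {ε : ℝ}
    (h : ∀ u, |p t u - (Fintype.card G : ℝ)⁻¹| ≤ ε) (v : G) :
    |p (t + 1) v - (Fintype.card G : ℝ)⁻¹| ≤ ε := by
  simpa [hadd] using abs_sum_mul_sub_inv_card_le (hp t) (hp 1) (hp0 1) h v

lemma exists_forall_abs_sub_inv_card_le {T : ℕ} {δ : ℝ} (hδ : 0 < δ) (hpδ : ∀ u, δ ≤ p T u)
    {ε : ℝ} (hε : 0 < ε) : ∃ t, ∀ v, |p t v - (Fintype.card G : ℝ)⁻¹| ≤ ε := by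
  set c := 1 - Fintype.card G * δ
  have hdecay : ∀ k v, |p (k * T) v - (Fintype.card G : ℝ)⁻¹| ≤ c ^ k := by
    intro k
    induction k with
    | zero =>
      intro v
      have hle : p 0 v ≤ 1 := hp 0 ▸ single_le_sum (fun u _ ↦ hp0 0 u) (mem_univ v)
      have hθ : (Fintype.card G : ℝ)⁻¹ ≤ 1 :=
        inv_le_one_of_one_le₀ (by exact_mod_cast Fintype.card_pos)
      simpa using abs_sub_le_of_nonneg_of_le (hp0 0 v) hle (by positivity) hθ
    | succ k ih =>
      intro v
      rw [add_mul, one_mul, hadd, pow_succ]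
      exact abs_sum_mul_sub_inv_card_le (hp _) (hp T) hpδ ih v
  obtain ⟨k, hk⟩ := exists_pow_lt_of_lt_one hε
    (sub_lt_self 1 (mul_pos (by exact_mod_cast Fintype.card_pos) hδ) : c < 1)
  exact ⟨k * T, fun v ↦ (hdecay k v).trans hk.le⟩

end ConvolutionMixing

section LatticeKernel

lemma torusProj_add (n : ℕ) (x y : Fin 4 → ℤ) :
    torusProj n (x + y) = torusProj n x + torusProj n y := by
  ext i
  simp [torusProj]

lemma stepProb_unitVec (i : Fin 4) : stepProb (unitVec i) = 1 / 16 := by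
  have hne : unitVec i ≠ 0 := fun h ↦ by simpa [unitVec] using congrFun h i
  rw [stepProb, if_neg hne, if_pos ⟨i, Or.inl rfl⟩]

lemma latticeQ_mul_stepProb_le (t : ℕ) (x y : Fin 4 → ℤ) :
    latticeQ t y * stepProb (x - y) ≤ latticeQ (t + 1) x :=
  ENNReal.le_tsum (f := fun y ↦ latticeQ t y * stepProb (x - y)) y

lemma latticeQ_le_tp (n t : ℕ) (z : Fin 4 → ℤ) : latticeQ t z ≤ tp t n 0 (torusProj n z) := by
  simpa [tp] using ENNReal.le_tsum
    (f := fun z' ↦ if torusProj n z' = torusProj n z - 0 then latticeQ t z' else 0) z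

lemma pow_le_latticeQ (t : ℕ) (z : Fin 4 → ℤ) (hz : 0 ≤ z) (hzt : ∑ i, z i ≤ t) :
    16⁻¹ ^ t ≤ latticeQ t z := by
  induction t generalizing z with
  | zero =>
    have : z = 0 := funext fun i ↦ (sum_eq_zero_iff_of_nonneg fun i _ ↦ hz i).mp
      (le_antisymm (by exact_mod_cast hzt) (sum_nonneg fun i _ ↦ hz i)) i (mem_univ i)
    simp [this, latticeQ]
  | succ t ih =>
    -- the last step either stays put or moves up along a positive coordinate of `z`
    by_cases hle : ∑ i, z i ≤ t
    · calc 16⁻¹ ^ (t + 1) ≤ 16⁻¹ ^ t * stepProb (z - z) := by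
            rw [sub_self, stepProb, if_pos rfl, pow_succ]
            gcongr
            rw [one_div]
            exact ENNReal.inv_le_inv.mpr (by norm_num)
        _ ≤ latticeQ t z * stepProb (z - z) := by gcongr; exact ih z hz hle
        _ ≤ latticeQ (t + 1) z := latticeQ_mul_stepProb_le t z z
    · obtain ⟨i, hi⟩ : ∃ i, 0 < z i := by
        by_contra! h
        exact hle ((sum_nonpos fun i _ ↦ h i).trans (by positivity))
      have hunit : ∀ j, unitVec i j = if j = i then 1 else 0 := fun j ↦ rfl
      have hy : 0 ≤ z - unitVec i := fun j ↦ by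
        by_cases hj : j = i <;> simp [hunit, hj] <;> [omega; exact hz j]
      have hyt : ∑ j, (z - unitVec i) j ≤ t := by
        simp only [Pi.sub_apply, sum_sub_distrib, hunit, sum_ite_eq', mem_univ, if_true]
        push_cast at hzt
        omega
      calc 16⁻¹ ^ (t + 1) = 16⁻¹ ^ t * stepProb (z - (z - unitVec i)) := by
            rw [sub_sub_cancel, stepProb_unitVec, pow_succ, one_div]
        _ ≤ latticeQ t (z - unitVec i) * stepProb (z - (z - unitVec i)) := by
            gcongr; exact ih _ hy hyt
        _ ≤ latticeQ (t + 1) z := latticeQ_mul_stepProb_le t z _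

lemma pow_le_tp {n : ℕ} [NeZero n] (v : Torus n) :
    16⁻¹ ^ (4 * (n - 1)) ≤ tp (4 * (n - 1)) n 0 v := by
  let z : Fin 4 → ℤ := fun i ↦ (v i).val
  have hz : torusProj n z = v := funext fun i ↦ by simp [torusProj, z]
  have hval : ∀ i, (v i).val ≤ n - 1 := fun i ↦ Nat.le_sub_one_of_lt (ZMod.val_lt (v i))
  refine (pow_le_latticeQ _ z (fun i ↦ by positivity) ?_).trans (hz ▸ latticeQ_le_tp n _ z)
  simp only [Fin.sum_univ_four, z]
  have := hval 0; have := hval 1; have := hval 2; have := hval 3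
  push_cast
  omega

end LatticeKernel

section LazySteps

variable {Ω : Type*} [MeasureSpace Ω]

structure IsLazyStepSeq (ξ : ℕ → Ω → Fin 4 → ℤ) : Prop where
  measurable : ∀ k, Measurable (ξ k)
  measure_eq : ∀ k x, ℙ {ω | ξ k ω = x} = stepProb x
  indep : iIndepFun ξ ℙ

namespace IsLazyStepSeq

variable {ξ : ℕ → Ω → Fin 4 → ℤ} (hξ : IsLazyStepSeq ξ)
include hξ

lemma shift (a : ℕ) : IsLazyStepSeq fun i ↦ ξ (a + i) :=
  ⟨fun _ ↦ hξ.measurable _, fun _ ↦ hξ.measure_eq _, hξ.indep.precomp (add_right_injective a)⟩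

lemma measure_sum_eq_latticeQ (t : ℕ) (z : Fin 4 → ℤ) :
    ℙ {ω | ∑ i ∈ range t, ξ i ω = z} = latticeQ t z := by
  have := hξ.indep.isProbabilityMeasure
  induction t generalizing z with
  | zero => by_cases hz : z = 0 <;> simp [latticeQ, hz, eq_comm]
  | succ t ih =>
    have hindep : IndepFun (fun ω ↦ ∑ i ∈ range t, ξ i ω) (ξ t) ℙ := by
      simpa only [Finset.sum_fn] using
        hξ.indep.indepFun_finsetSum_of_notMem hξ.measurable notMem_range_self
    simp only [sum_range_succ, hindep.measure_add_eq_tsum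
      (Finset.measurable_sum _ fun i _ ↦ hξ.measurable i) (hξ.measurable t), ih, hξ.measure_eq,
      latticeQ]

lemma measure_torusProj_sum_eq_tp (n t : ℕ) (v : Torus n) :
    ℙ {ω | torusProj n (∑ i ∈ range t, ξ i ω) = v} = tp t n 0 v := by
  have hS : Measurable fun ω ↦ ∑ i ∈ range t, ξ i ω :=
    Finset.measurable_sum _ fun i _ ↦ hξ.measurable i
  rw [tp, sub_zero, ← Set.preimage_ofPred_eq (p := fun z ↦ torusProj n z = v),
    ← Measure.map_apply hS .of_discrete,
    ← Measure.tsum_indicator_apply_singleton _ _ .of_discrete]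
  refine tsum_congr fun z ↦ ?_
  simp only [Set.indicator, Set.mem_ofPred_eq, Measure.map_apply hS (.singleton z)]
  split_ifs <;> simp [← hξ.measure_sum_eq_latticeQ t z, Set.preimage]

lemma map_steps_eq_map_steps {Ω' : Type*} [MeasureSpace Ω'] {η : ℕ → Ω' → Fin 4 → ℤ}
    (hη : IsLazyStepSeq η) (K : ℕ) :
    (ℙ : Measure Ω).map (fun ω (i : Fin K) ↦ ξ i ω) =
      (ℙ : Measure Ω').map (fun ω (i : Fin K) ↦ η i ω) := by
  rw [(hξ.indep.precomp Fin.val_injective).map_fun_eq_pi_map (f := fun (i : Fin K) ↦ ξ i)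
      fun i ↦ (hξ.measurable i).aemeasurable,
    (hη.indep.precomp Fin.val_injective).map_fun_eq_pi_map (f := fun (i : Fin K) ↦ η i)
      fun i ↦ (hη.measurable i).aemeasurable]
  congr 1
  funext i
  refine Measure.ext_iff_singleton.mpr fun x ↦ ?_
  rw [Measure.map_apply (hξ.measurable i) (.singleton x),
    Measure.map_apply (hη.measurable i) (.singleton x)]
  exact (hξ.measure_eq i x).trans (hη.measure_eq i x).symm

end IsLazyStepSeq

end LazySteps

section TorusWalk

variable {Ω : Type*} [MeasureSpace Ω] {n : ℕ}

def incrementPath (X : ℕ → Ω → Torus n) (a K : ℕ) (ω : Ω) : Fin (K + 1) → Torus n :=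
  fun j ↦ X (a + j) ω - X a ω

def partialSumPath (n : ℕ) {K : ℕ} (x : Fin K → Fin 4 → ℤ) : Fin (K + 1) → Torus n :=
  fun j ↦ torusProj n (∑ i : Fin j, x (Fin.castLE j.is_le i))

omit [MeasureSpace Ω] in
lemma sub_eq_torusProj_sum {X : ℕ → Ω → Torus n} {ξ : ℕ → Ω → Fin 4 → ℤ}
    (hX : ∀ t ω, X t ω = X 0 ω + torusProj n (∑ k ∈ range t, ξ k ω)) (a t : ℕ) (ω : Ω) :
    X (a + t) ω - X a ω = torusProj n (∑ i ∈ range t, ξ (a + i) ω) := by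
  rw [hX, hX a, sum_range_add, torusProj_add]
  abel

omit [MeasureSpace Ω] in
lemma incrementPath_eq_partialSumPath {X : ℕ → Ω → Torus n} {ξ : ℕ → Ω → Fin 4 → ℤ}
    (hX : ∀ t ω, X t ω = X 0 ω + torusProj n (∑ k ∈ range t, ξ k ω)) (a K : ℕ) :
    incrementPath X a K = partialSumPath n ∘ fun ω (i : Fin K) ↦ ξ (a + i) ω := by
  funext ω j
  simp only [incrementPath, Function.comp_apply, partialSumPath, sub_eq_torusProj_sum hX,
    sum_range]
  rfl

namespace IsTorusWalk

variable {X : ℕ → Ω → Torus n} (hX : IsTorusWalk n X)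
include hX

lemma isProbabilityMeasure : IsProbabilityMeasure (ℙ : Measure Ω) := by
  obtain ⟨-, ξ, -, -, hξ, -⟩ := hX
  exact hξ.isProbabilityMeasure

lemma measure_sub_eq_tp (a t : ℕ) (v : Torus n) :
    ℙ {ω | X (a + t) ω - X a ω = v} = tp t n 0 v := by
  obtain ⟨-, ξ, hξm, hξlaw, hξind, -, hXeq⟩ := hX
  simp only [sub_eq_torusProj_sum hXeq]
  exact (IsLazyStepSeq.shift ⟨hξm, hξlaw, hξind⟩ a).measure_torusProj_sum_eq_tp n t v

lemma map_incrementPath_eq {Ω' : Type*} [MeasureSpace Ω'] {Y : ℕ → Ω' → Torus n}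
    (hY : IsTorusWalk n Y) (a b K : ℕ) :
    (ℙ : Measure Ω).map (incrementPath X a K) = (ℙ : Measure Ω').map (incrementPath Y b K) := by
  obtain ⟨-, ξ, hξm, hξlaw, hξind, -, hXeq⟩ := hX
  obtain ⟨-, η, hηm, hηlaw, hηind, -, hYeq⟩ := hY
  have hξ := IsLazyStepSeq.shift ⟨hξm, hξlaw, hξind⟩ a
  have hη := IsLazyStepSeq.shift ⟨hηm, hηlaw, hηind⟩ b
  rw [incrementPath_eq_partialSumPath hXeq, incrementPath_eq_partialSumPath hYeq,
    ← Measure.map_map (g := partialSumPath n) .of_discrete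
      (measurable_pi_lambda _ fun i ↦ hξ.measurable i),
    ← Measure.map_map (g := partialSumPath n) .of_discrete
      (measurable_pi_lambda _ fun i ↦ hη.measurable i),
    hξ.map_steps_eq_map_steps hη K]

variable [NeZero n]

lemma measurable_incrementPath (a K : ℕ) : Measurable (incrementPath X a K) :=
  measurable_pi_lambda _ fun _ ↦ (hX.1 _).sub (hX.1 a)

lemma indepFun_path_incrementPath (L K : ℕ) :
    IndepFun (fun ω (i : Fin (L + 1)) ↦ X i ω) (incrementPath X L K) ℙ := by
  have := hX.isProbabilityMeasure
  obtain ⟨hXm, ξ, hξm, -, hξind, hX0, hXeq⟩ := hX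
  let F : (ℕ → Fin 4 → ℤ) → Fin (L + 1) → Torus n := fun g i ↦ torusProj n (∑ k ∈ range i, g k)
  let G : (ℕ → Fin 4 → ℤ) → Fin (K + 1) → Torus n :=
    fun g j ↦ torusProj n (∑ k ∈ range j, g (L + k))
  have hF : DependsOn F (range L) := by
    intro g g' h
    funext i
    refine congrArg (torusProj n) (sum_congr rfl fun k hk ↦ h k ?_)
    simp only [coe_range, Set.mem_Iio, mem_range] at hk ⊢
    omega
  have hG : DependsOn G (Ico L (L + K)) := by
    intro g g' h
    funext j
    refine congrArg (torusProj n) (sum_congr rfl fun k hk ↦ h (L + k) ?_)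
    simp only [coe_Ico, Set.mem_Ico, mem_range] at hk ⊢
    omega
  have hFm : Measurable F := measurable_pi_lambda _ fun i ↦
    (Measurable.of_discrete (f := torusProj n)).comp <|
      Finset.measurable_sum _ fun k _ ↦ measurable_pi_apply k
  have hGm : Measurable G := measurable_pi_lambda _ fun j ↦
    (Measurable.of_discrete (f := torusProj n)).comp <|
      Finset.measurable_sum _ fun k _ ↦ measurable_pi_apply (L + k)
  have hΞ : Measurable fun ω k ↦ ξ k ω := measurable_pi_lambda _ hξm
  have hFG := hξind.indepFun_comp_of_dependsOn hξm
    (by rw [range_eq_Ico]; exact Ico_disjoint_Ico_consecutive 0 L (L + K)) hF hG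
  have hX0FG : IndepFun (X 0) (fun ω ↦ (F (ξ · ω), G (ξ · ω))) ℙ :=
    hX0.comp measurable_id (hFm.prodMk hGm)
  convert (hX0FG.prodMk_left_of_prodMk_right (hXm 0) (hFm.comp hΞ) (hGm.comp hΞ) hFG).comp
    (φ := fun p i ↦ p.1 + p.2 i) .of_discrete measurable_id using 1
  · funext ω i
    exact hXeq i ω
  · funext ω j
    exact sub_eq_torusProj_sum hXeq L j ω

lemma indepFun_path_sub_prodMk_incrementPath (L d M : ℕ) :
    IndepFun (fun ω (i : Fin (L + 1)) ↦ X i ω)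
      (fun ω ↦ (X (L + d) ω - X L ω, incrementPath X (L + d) M ω)) ℙ := by
  convert (hX.indepFun_path_incrementPath L (d + M)).comp measurable_id
    (ψ := fun q ↦ (q ⟨d, by omega⟩, fun j : Fin (M + 1) ↦ q ⟨d + j, by omega⟩ - q ⟨d, by omega⟩))
    .of_discrete using 1
  · rfl
  · funext ω
    refine Prod.ext rfl (funext fun j ↦ ?_)
    simp only [Function.comp_apply, incrementPath, add_assoc, sub_sub_sub_cancel_right]

lemma indepFun_sub_incrementPath (L d M : ℕ) :
    IndepFun (fun ω ↦ X (L + d) ω - X L ω) (incrementPath X (L + d) M) ℙ :=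
  (hX.indepFun_path_incrementPath (L + d) M).comp
    (φ := fun p : Fin (L + d + 1) → Torus n ↦ p (Fin.last _) - p ⟨L, by omega⟩)
    .of_discrete measurable_id

lemma indepFun_zero_incrementPath (K : ℕ) : IndepFun (X 0) (incrementPath X 0 K) ℙ :=
  (hX.indepFun_path_incrementPath 0 K).comp (φ := fun p : Fin (0 + 1) → Torus n ↦ p 0)
    .of_discrete measurable_id

lemma sum_tp (t : ℕ) : ∑ v, tp t n 0 v = 1 := by
  have := hX.isProbabilityMeasure
  calc ∑ v, tp t n 0 v = ∑ v, ℙ ((fun ω ↦ X (0 + t) ω - X 0 ω) ⁻¹' {v}) := by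
        simp_rw [← hX.measure_sub_eq_tp 0 t]
        rfl
    _ = 1 := by
        rw [sum_measure_preimage_singleton (f := fun ω ↦ X (0 + t) ω - X 0 ω) _
            fun v _ ↦ ((hX.1 _).sub (hX.1 0)) (.singleton v),
          coe_univ, Set.preimage_univ, measure_univ]

lemma tp_add (s t : ℕ) (v : Torus n) :
    tp (s + t) n 0 v = ∑ u, tp s n 0 u * tp t n 0 (v - u) := by
  have hindep : IndepFun (fun ω ↦ X s ω - X 0 ω) (fun ω ↦ X (s + t) ω - X s ω) ℙ :=
    (hX.indepFun_path_incrementPath s t).comp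
      (φ := fun p : Fin (s + 1) → Torus n ↦ p (Fin.last s) - p 0)
      (ψ := fun q : Fin (t + 1) → Torus n ↦ q (Fin.last t)) .of_discrete .of_discrete
  have hs : ∀ u, ℙ {ω | X s ω - X 0 ω = u} = tp s n 0 u := by
    simpa using hX.measure_sub_eq_tp 0 s
  calc tp (s + t) n 0 v = ℙ {ω | X (0 + (s + t)) ω - X 0 ω = v} :=
        (hX.measure_sub_eq_tp 0 _ v).symm
    _ = ℙ {ω | (X s ω - X 0 ω) + (X (s + t) ω - X s ω) = v} := by
        simp_rw [zero_add, sub_add_sub_cancel']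
    _ = ∑ u, tp s n 0 u * tp t n 0 (v - u) := by
        rw [hindep.measure_add_eq_tsum ((hX.1 s).sub (hX.1 0)) ((hX.1 _).sub (hX.1 s)),
          tsum_fintype]
        simp only [hs, hX.measure_sub_eq_tp s t]

lemma tp_le_of_mixTime_le {d : ℕ} (hd : mixTime n ≤ d) (v : Torus n) :
    tp d n 0 v ≤ 3 / 2 * ((n : ℝ≥0∞) ^ 4)⁻¹ := by
  have hfin : ∀ t v, tp t n 0 v ≠ ⊤ := fun t v ↦ ne_top_of_le_ne_top ENNReal.one_ne_top <|
    (single_le_sum (fun u _ ↦ zero_le) (mem_univ v)).trans_eq (hX.sum_tp t)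
  set p : ℕ → Torus n → ℝ := fun t v ↦ (tp t n 0 v).toReal
  have hp : ∀ t, ∑ u, p t u = 1 := fun t ↦ by
    rw [← ENNReal.toReal_sum fun u _ ↦ hfin t u, hX.sum_tp, ENNReal.toReal_one]
  have hp0 : ∀ t u, 0 ≤ p t u := fun _ _ ↦ ENNReal.toReal_nonneg
  have hadd : ∀ s t v, p (s + t) v = ∑ u, p s u * p t (v - u) := fun s t v ↦ by
    simp only [p, hX.tp_add s t v, ENNReal.toReal_mul,
      ENNReal.toReal_sum fun u _ ↦ ENNReal.mul_ne_top (hfin _ _) (hfin _ _)]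
  have hcard : (Fintype.card (Torus n) : ℝ)⁻¹ = 1 / (n : ℝ) ^ 4 := by simp [ZMod.card]
  have hn : (0 : ℝ) < n := by exact_mod_cast NeZero.pos n
  -- `mixTime n` is an `sInf` in `ℕ`, which is `0` for the empty set
  have hmix : {t | ∀ x : Torus n, |p t x - 1 / (n : ℝ) ^ 4| ≤ 1 / (2 * (n : ℝ) ^ 4)}.Nonempty := by
    have hδ : (0 : ℝ) < ((16 : ℝ≥0∞)⁻¹ ^ (4 * (n - 1))).toReal :=
      ENNReal.toReal_pos (by simp) (by simp)
    rw [← hcard]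
    exact exists_forall_abs_sub_inv_card_le hp hp0 hadd hδ
      (fun u ↦ ENNReal.toReal_mono (hfin _ _) (pow_le_tp u)) (by positivity)
  have hd' : ∀ x, |p d x - 1 / (n : ℝ) ^ 4| ≤ 1 / (2 * (n : ℝ) ^ 4) := by
    refine Nat.le_induction (Nat.sInf_mem hmix) (fun t _ ih ↦ ?_) d hd
    rw [← hcard] at ih ⊢
    exact abs_sub_inv_card_le_succ hp hp0 hadd ih
  have hreal : p d v ≤ 3 / 2 * ((n : ℝ) ^ 4)⁻¹ := by
    have h1 := (abs_le.mp (hd' v)).2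
    have h2 : 1 / (n : ℝ) ^ 4 + 1 / (2 * (n : ℝ) ^ 4) = 3 / 2 * ((n : ℝ) ^ 4)⁻¹ := by
      field_simp; ring
    linarith
  rw [← ENNReal.ofReal_toReal (hfin d v)]
  refine (ENNReal.ofReal_le_ofReal hreal).trans_eq ?_
  rw [ENNReal.ofReal_mul (by norm_num), ENNReal.ofReal_inv_of_pos (by positivity),
    ENNReal.ofReal_pow hn.le, ENNReal.ofReal_natCast, ENNReal.ofReal_div_of_pos (by norm_num)]
  norm_num

end IsTorusWalk

end TorusWalk

theorem statement3_general {Ω : Type} [MeasureSpace Ω]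
    (n L M d : ℕ) (hn : 2 ≤ n) (hd : mixTime n ≤ d)
    (X Y : ℕ → Ω → Torus n) (hX : IsTorusWalk n X) (hY : IsTorusWalk n Y)
    (hY0 : IsUniformStart n (Y 0))
    (hindep : IndepFun (fun ω (t : ℕ) => X t ω) (fun ω (t : ℕ) => Y t ω) volume)
    (f : (Fin (L + 1) → Torus n) → (Fin (M + 1) → Torus n) → ℝ≥0∞) :
    ∫⁻ ω, f (fun i => X i ω) (fun j => X (L + d + j) ω) ∂volume ≤
      3 / 2 * ∫⁻ ω, f (fun i => X i ω) (fun j => Y j ω) ∂volume := by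
  have : NeZero n := ⟨by omega⟩
  have hRR' (r : Fin (M + 1) → Torus n) :
      ℙ (incrementPath X (L + d) M ⁻¹' {r}) = ℙ (incrementPath Y 0 M ⁻¹' {r}) := by
    rw [← Measure.map_apply (hX.measurable_incrementPath _ _) (.singleton r),
      ← Measure.map_apply (hY.measurable_incrementPath _ _) (.singleton r),
      hX.map_incrementPath_eq hY]
  have hVU (v u : Torus n) :
      ℙ ((fun ω ↦ X (L + d) ω - X L ω) ⁻¹' {v}) ≤ 3 / 2 * ℙ (Y 0 ⁻¹' {u}) :=
    (hX.measure_sub_eq_tp L d v).trans_le <| (hX.tp_le_of_mixTime_le hd v).trans_eq <|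
      congrArg _ (hY0 u).symm
  have hXY : IndepFun (fun ω (i : Fin (L + 1)) ↦ X i ω)
      (fun ω ↦ (Y 0 ω, incrementPath Y 0 M ω)) ℙ :=
    hindep.comp (measurable_pi_lambda _ fun i ↦ measurable_pi_apply _)
      ((measurable_pi_apply 0).prodMk (measurable_pi_lambda _ fun j ↦
        (measurable_pi_apply _).sub (measurable_pi_apply 0)))
  have key := lintegral_comp_add_le_of_indepFun (A := fun ω (i : Fin (L + 1)) ↦ X i ω)
    (measurable_pi_lambda _ fun i ↦ hX.1 i) ((hX.1 _).sub (hX.1 L))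
    (hX.measurable_incrementPath _ _) (hY.1 0)
    (hY.measurable_incrementPath _ _) (hX.indepFun_path_sub_prodMk_incrementPath L d M)
    (hX.indepFun_sub_incrementPath L d M) hXY (hY.indepFun_zero_incrementPath M) hRR' hVU
    (fun a ↦ a (Fin.last L)) (fun a y r ↦ f a fun j ↦ y + r j)
  convert key using 4 <;> simp [incrementPath]

/-- Mixing lemma: if `d ≥ τ_n`, then for any nonnegative function `f` of a pair of paths,
`E[f(X[0,L], X[L+d, L+M+d])] ≤ (3/2) E[f(X[0,L], Y[0,M])]` where `Y` is an independent
walk started from the uniform distribution. -/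
theorem statement3 {Ω : Type} [MeasureSpace Ω] [IsProbabilityMeasure (volume : Measure Ω)]
    (n L M d : ℕ) (hn : 2 ≤ n) (hd : mixTime n ≤ d)
    (X Y : ℕ → Ω → Torus n) (hX : IsTorusWalk n X) (hY : IsTorusWalk n Y)
    (hY0 : IsUniformStart n (Y 0))
    (hindep : IndepFun (fun ω (t : ℕ) => X t ω) (fun ω (t : ℕ) => Y t ω) volume)
    (f : (Fin (L + 1) → Torus n) → (Fin (M + 1) → Torus n) → ℝ≥0∞)
    (hf : Measurable (Function.uncurry f)) :
    ∫⁻ ω, f (fun i => X i ω) (fun j => X (L + d + j) ω) ∂volume ≤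
      3 / 2 * ∫⁻ ω, f (fun i => X i ω) (fun j => Y j ω) ∂volume :=
  statement3_general n L M d hn hd X Y hX hY hY0 hindep f
end

section
/- Let Y_1,…,Y_n and Z_1,…,Z_n be {0,1}-valued random variables (defined on possibly different probability spaces). Let p_i = P(Y_i = 1), q_i = P(Z_i = 1), q_{ij} = P(Y_i = 1 and Y_j = 1), and p_{ij} = P(Z_i = 1 and Z_j = 1). Then there exists a coupling of the random vectors (Y_1,…,Y_n) and (Z_1,…,Z_n), i.e. a probability space carrying random vectors with these two joint distributions, under which P(Y_i ≠ Z_i for some i = 1,…,n) ≤ Σ_{i=1}^{n} Σ_{j ≠ i} (p_{ij} + q_{ij}) + Σ_{i=1}^{n} |p_i − q_i|. -/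
open MeasureTheory ProbabilityTheory Filter
open scoped ENNReal

/-!
Let `μ`, `ν` be the laws of `(Yᵢ)` and `(Zᵢ)` on the cube `{0,1}ⁿ`. The maximal coupling keeps
the common mass `min (μ {a}) (ν {a})` on the diagonal and pairs the excess of `μ` over `ν` with
the excess of `ν` over `μ` independently, so the two vectors differ with probability
`∑ₐ (μ {a} - ν {a})⁺`.

To bound that sum, split the cube by the number `N` of ones, for which
`E_μ N = ∑ᵢ μ(aᵢ = 1)` and `E_μ N(N-1) = ∑_{i ≠ j} μ(aᵢ = aⱼ = 1)`. At `a = 0` use the first two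
Bonferroni inequalities: `1 - E_ν N ≤ ν {0}` and `μ {0} ≤ 1 - E_μ N + E_μ N(N-1)/2`. At the unit
vector `eᵢ`, `μ {eᵢ} ≤ μ(aᵢ = 1)` while `ν {eᵢ} ≥ ν(aᵢ = 1) - ∑_{j ≠ i} ν(aᵢ = aⱼ = 1)`.
Finally `μ(N ≥ 2) ≤ E_μ N(N-1)/2`.
-/
open Finset

lemma ENNReal.toReal_sub_eq_posPart {a b : ℝ≥0∞} (ha : a ≠ ∞) (hb : b ≠ ∞) :
    (a - b).toReal = (a.toReal - b.toReal)⁺ := by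
  rcases le_total a b with h | h
  · rw [tsub_eq_zero_of_le h, ENNReal.toReal_zero, eq_comm, posPart_eq_zero, sub_nonpos]
    exact ENNReal.toReal_mono hb h
  · rw [ENNReal.toReal_sub_of_le h ha, eq_comm, posPart_eq_self, sub_nonneg]
    exact ENNReal.toReal_mono ha h

lemma MeasureTheory.measureReal_setOf_eq_sum {α : Type*} [Fintype α] [MeasurableSpace α]
    [MeasurableSingletonClass α] (μ : Measure α) [IsFiniteMeasure μ] (p : α → Prop)
    [DecidablePred p] : μ.real {a | p a} = ∑ a, (if p a then 1 else 0) * μ.real {a} := by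
  simp_rw [boole_mul]
  rw [← sum_filter, sum_measureReal_singleton, coe_filter_univ]

namespace MeasureTheory.Measure

variable {α : Type*} [MeasurableSpace α]

lemma inv_measure_univ_mul_smul (e : Measure α) [IsFiniteMeasure e] :
    ((e Set.univ)⁻¹ * e Set.univ) • e = e := by
  rcases eq_or_ne (e Set.univ) 0 with h | h
  · rw [measure_univ_eq_zero.mp h, smul_zero]
  · rw [ENNReal.inv_mul_cancel h (measure_ne_top e Set.univ), one_smul]

noncomputable def excess (μ ν : Measure α) : Measure α :=
  sum fun a => (μ {a} - ν {a}) • dirac a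

noncomputable def maximalCoupling (μ ν : Measure α) : Measure (α × α) :=
  sum (fun a => min (μ {a}) (ν {a}) • dirac (a, a)) +
    (excess μ ν Set.univ)⁻¹ • (excess μ ν).prod (excess ν μ)

variable [Fintype α]

lemma excess_univ (μ ν : Measure α) : excess μ ν Set.univ = ∑ a, (μ {a} - ν {a}) := by
  simp [excess]

instance (μ ν : Measure α) [IsFiniteMeasure μ] : IsFiniteMeasure (excess μ ν) :=
  ⟨by
    rw [excess_univ]
    exact ENNReal.sum_lt_top.mpr fun a _ => tsub_le_self.trans_lt (measure_lt_top μ _)⟩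

lemma toReal_excess_univ (μ ν : Measure α) [IsFiniteMeasure μ] [IsFiniteMeasure ν] :
    (excess μ ν Set.univ).toReal = ∑ a, (μ.real {a} - ν.real {a})⁺ := by
  rw [excess_univ, ENNReal.toReal_sum fun a _ => (tsub_le_self.trans_lt (measure_lt_top μ _)).ne]
  exact Finset.sum_congr rfl fun a _ =>
    ENNReal.toReal_sub_eq_posPart (measure_ne_top μ _) (measure_ne_top ν _)

variable [MeasurableSingletonClass α]

lemma sum_min_smul_dirac_add_excess (μ ν : Measure α) :
    sum (fun a => min (μ {a}) (ν {a}) • dirac a) + excess μ ν = μ := by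
  rw [excess, sum_add_sum]
  simp_rw [← add_smul, add_comm (min _ _), tsub_add_min]
  exact sum_smul_dirac μ

lemma excess_univ_comm (μ ν : Measure α) [IsFiniteMeasure μ] (h : μ Set.univ = ν Set.univ) :
    excess μ ν Set.univ = excess ν μ Set.univ := by
  have hμ := congr_arg (· Set.univ) (sum_min_smul_dirac_add_excess μ ν)
  have hν := congr_arg (· Set.univ) (sum_min_smul_dirac_add_excess ν μ)
  simp only [add_apply, min_comm (ν _)] at hμ hν
  refine (ENNReal.add_right_inj ?_).mp (hμ.trans (h.trans hν.symm))
  exact ne_top_of_le_ne_top (measure_ne_top μ Set.univ) (hμ ▸ le_self_add)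

lemma map_fst_maximalCoupling (μ ν : Measure α) [IsFiniteMeasure μ]
    (h : μ Set.univ = ν Set.univ) : (maximalCoupling μ ν).map Prod.fst = μ := by
  rw [maximalCoupling, Measure.map_add _ _ measurable_fst, Measure.map_smul, map_fst_prod,
    map_sum measurable_fst.aemeasurable, ← excess_univ_comm μ ν h, smul_smul,
    inv_measure_univ_mul_smul]
  simp_rw [Measure.map_smul, map_dirac' measurable_fst]
  exact sum_min_smul_dirac_add_excess μ ν

lemma map_snd_maximalCoupling (μ ν : Measure α) [IsFiniteMeasure μ] [IsFiniteMeasure ν]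
    (h : μ Set.univ = ν Set.univ) : (maximalCoupling μ ν).map Prod.snd = ν := by
  rw [maximalCoupling, Measure.map_add _ _ measurable_snd, Measure.map_smul, map_snd_prod,
    map_sum measurable_snd.aemeasurable, excess_univ_comm μ ν h, smul_smul,
    inv_measure_univ_mul_smul]
  simp_rw [Measure.map_smul, map_dirac' measurable_snd, min_comm (μ _)]
  exact sum_min_smul_dirac_add_excess ν μ

instance (μ ν : Measure α) [IsProbabilityMeasure μ] [IsProbabilityMeasure ν] :
    IsProbabilityMeasure (maximalCoupling μ ν) := by
  rw [← isProbabilityMeasure_map_iff measurable_fst.aemeasurable,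
    map_fst_maximalCoupling μ ν (by simp)]
  infer_instance

lemma maximalCoupling_ne_le (μ ν : Measure α) [IsFiniteMeasure μ] [IsFiniteMeasure ν]
    (h : μ Set.univ = ν Set.univ) :
    maximalCoupling μ ν {p | p.1 ≠ p.2} ≤ excess μ ν Set.univ := by
  have hdiag : sum (fun a => min (μ {a}) (ν {a}) • dirac (a, a)) {p : α × α | p.1 ≠ p.2} = 0 := by
    simp
  rw [maximalCoupling, add_apply, hdiag, zero_add, smul_apply, smul_eq_mul]
  set m := excess μ ν Set.univ
  calc m⁻¹ * (excess μ ν).prod (excess ν μ) {p | p.1 ≠ p.2}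
      ≤ m⁻¹ * (excess μ ν).prod (excess ν μ) Set.univ := by gcongr; exact Set.subset_univ _
    _ = (m⁻¹ * m) * m := by
      rw [← Set.univ_prod_univ, prod_prod, ← excess_univ_comm μ ν h, mul_assoc]
    _ ≤ 1 * m := by gcongr; exact ENNReal.inv_mul_le_one _
    _ = m := one_mul m

end MeasureTheory.Measure

namespace BoolCube

open MeasureTheory

variable {ι : Type*}

def weight [Fintype ι] (a : ι → Bool) : ℕ := #{i | a i = true}

def singleTrue [DecidableEq ι] (i : ι) : ι → Bool := fun j => decide (j = i)

def pairSum [Fintype ι] [DecidableEq ι] (μ : Measure (ι → Bool)) : ℝ :=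
  ∑ i, ∑ j ∈ univ.erase i, μ.real {a | a i = true ∧ a j = true}

lemma singleTrue_injective [DecidableEq ι] : Function.Injective (singleTrue : ι → ι → Bool) :=
  fun i j h => by simpa [singleTrue] using congr_fun h i

lemma measureReal_singleTrue_le [DecidableEq ι] (μ : Measure (ι → Bool)) [IsFiniteMeasure μ]
    (i : ι) : μ.real {singleTrue i} ≤ μ.real {a | a i = true} :=
  measureReal_mono (by simp [singleTrue])

lemma weight_eq_zero_iff [Fintype ι] {a : ι → Bool} : weight a = 0 ↔ a = fun _ => false := by
  simp [weight, filter_eq_empty_iff, funext_iff]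

lemma one_sub_le_measureReal_const_false [Fintype ι] (μ : Measure (ι → Bool)) [IsProbabilityMeasure μ] :
    1 - ∑ i, μ.real {a | a i = true} ≤ μ.real {fun _ => false} := by
  have hcover : {fun _ => false}ᶜ ⊆ ⋃ i, {a : ι → Bool | a i = true} := fun a ha => by
    simpa [funext_iff] using ha
  rw [← sub_le_comm, ← probReal_compl_eq_one_sub (measurableSet_singleton _)]
  exact (measureReal_mono hcover).trans (measureReal_iUnion_fintype_le _)

variable [Fintype ι] [DecidableEq ι]

lemma sum_measureReal_coord_eq (μ : Measure (ι → Bool)) [IsFiniteMeasure μ] :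
    ∑ i, μ.real {a | a i = true} = ∑ a, weight a * μ.real {a} := by
  simp_rw [measureReal_setOf_eq_sum]
  rw [sum_comm]
  simp_rw [← sum_mul, sum_boole, weight]

lemma weight_eq_one_iff {a : ι → Bool} : weight a = 1 ↔ ∃ i, a = singleTrue i := by
  refine card_eq_one.trans (exists_congr fun i => ?_)
  simp only [Finset.ext_iff, funext_iff, mem_filter, mem_univ, true_and, mem_singleton, singleTrue]
  exact forall_congr' fun j => by cases a j <;> simp [eq_comm]

lemma sum_eq_add_sum_singleTrue_add {M : Type*} [AddCommMonoid M] (g : (ι → Bool) → M) :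
    ∑ a, g a = g (fun _ => false) + ∑ i, g (singleTrue i) + ∑ a with 2 ≤ weight a, g a := by
  have h0 : ({a | weight a = 0} : Finset (ι → Bool)) = {fun _ => false} := by
    ext a; simp [weight_eq_zero_iff]
  have h1 : ({a | ¬weight a = 0 ∧ weight a = 1} : Finset (ι → Bool)) = univ.image singleTrue := by
    ext a
    simp only [mem_filter, mem_univ, true_and, mem_image, eq_comm (b := a), ← weight_eq_one_iff]
    omega
  have h2 : ({a | ¬weight a = 0 ∧ ¬weight a = 1} : Finset (ι → Bool)) =
      ({a | 2 ≤ weight a} : Finset (ι → Bool)) :=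
    filter_congr fun a _ => by omega
  rw [← sum_filter_add_sum_filter_not univ (fun a => weight a = 0),
    ← sum_filter_add_sum_filter_not {a | ¬weight a = 0} (fun a => weight a = 1), filter_filter,
    filter_filter, h0, h1, h2, sum_singleton, sum_image fun i _ j _ h => singleTrue_injective h,
    add_assoc]

lemma sum_sum_erase_boole_and (a : ι → Bool) :
    ∑ i, ∑ j ∈ univ.erase i, (if a i = true ∧ a j = true then (1 : ℝ) else 0) =
      weight a * (weight a - 1) := by
  have hrow : ∀ i, ∑ j ∈ univ.erase i, (if a i = true ∧ a j = true then (1 : ℝ) else 0) =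
      (if a i = true then 1 else 0) * (weight a - 1) := by
    intro i
    by_cases h : a i = true
    · simp only [h, true_and, if_true, one_mul]
      rw [sum_erase_eq_sub (mem_univ i), sum_boole, h, if_pos rfl, weight]
    · simp [h]
  simp_rw [hrow, ← sum_mul, sum_boole, weight]

lemma pairSum_nonneg (μ : Measure (ι → Bool)) : 0 ≤ pairSum μ :=
  sum_nonneg fun _ _ => sum_nonneg fun _ _ => measureReal_nonneg

variable (μ : Measure (ι → Bool)) [IsFiniteMeasure μ]

lemma pairSum_eq : pairSum μ = ∑ a, weight a * (weight a - 1) * μ.real {a} := by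
  simp only [pairSum, measureReal_setOf_eq_sum]
  rw [sum_congr rfl fun i _ => sum_comm, sum_comm]
  simp_rw [← sum_mul, sum_sum_erase_boole_and]

lemma measureReal_const_false_le [IsProbabilityMeasure μ] :
    μ.real {fun _ => false} ≤ 1 - ∑ i, μ.real {a | a i = true} + pairSum μ / 2 := by
  -- the coefficient is `(w - 1) * (w - 2) / 2`
  have hcoef : ∀ w : ℕ, (0 : ℝ) ≤ 1 - w + w * (w - 1) / 2 := fun w => by
    rcases w with _ | _ | w <;> push_cast <;> nlinarith
  calc μ.real {fun _ => false}
      ≤ ∑ a, (1 - weight a + weight a * (weight a - 1) / 2) * μ.real {a} := by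
        refine le_of_eq_of_le ?_ (single_le_sum (fun a _ => mul_nonneg (hcoef _)
          measureReal_nonneg) (mem_univ fun _ => false))
        simp [weight]
    _ = 1 - ∑ i, μ.real {a | a i = true} + pairSum μ / 2 := by
        simp only [sum_measureReal_coord_eq, pairSum_eq, add_mul, sub_mul, one_mul,
          sum_add_distrib, sum_sub_distrib, sum_div, div_mul_eq_mul_div,
          sum_measureReal_singleton, coe_univ, probReal_univ]

lemma measureReal_coord_le (i : ι) :
    μ.real {a | a i = true} ≤
      μ.real {singleTrue i} + ∑ j ∈ univ.erase i, μ.real {a | a i = true ∧ a j = true} := by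
  have hcover : {a : ι → Bool | a i = true} ⊆
      {singleTrue i} ∪ ⋃ j ∈ univ.erase i, {a | a i = true ∧ a j = true} :=
    fun a (ha : a i = true) => by
    by_cases hother : ∀ j ≠ i, a j = false
    · refine Or.inl (funext fun j => ?_)
      by_cases hji : j = i
      · simp [singleTrue, hji, ha]
      · simp [singleTrue, hji, hother j hji]
    · obtain ⟨j, hji, hj⟩ : ∃ j ≠ i, a j = true := by simpa using hother
      exact Or.inr (Set.mem_biUnion (mem_erase.mpr ⟨hji, mem_univ j⟩) ⟨ha, hj⟩)
  calc μ.real {a | a i = true}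
      ≤ μ.real {singleTrue i} + μ.real (⋃ j ∈ univ.erase i, {a | a i = true ∧ a j = true}) :=
        (measureReal_mono hcover).trans (measureReal_union_le _ _)
    _ ≤ _ := by gcongr; exact measureReal_biUnion_finset_le _ _

lemma measureReal_two_le_weight_le : μ.real {a | 2 ≤ weight a} ≤ pairSum μ / 2 := by
  rw [measureReal_setOf_eq_sum, pairSum_eq, sum_div]
  refine sum_le_sum fun a _ => ?_
  rw [mul_div_right_comm]
  gcongr
  split_ifs with h
  · have : (2 : ℝ) ≤ weight a := by exact_mod_cast h
    nlinarith
  · rcases weight a with _ | w <;> push_cast <;> ring_nf <;> positivity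

theorem sum_posPart_measureReal_sub_le (ν : Measure (ι → Bool)) [IsProbabilityMeasure μ]
    [IsProbabilityMeasure ν] :
    ∑ a, (μ.real {a} - ν.real {a})⁺ ≤
      pairSum ν + pairSum μ + ∑ i, |μ.real {a | a i = true} - ν.real {a | a i = true}| := by
  set p : ι → ℝ := fun i => μ.real {a | a i = true}
  set q : ι → ℝ := fun i => ν.real {a | a i = true}
  have hfalse : (μ.real {fun _ => false} - ν.real {fun _ => false})⁺ ≤
      ∑ i, (q i - p i)⁺ + pairSum μ / 2 := by
    have hμ := measureReal_const_false_le μ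
    have hν := one_sub_le_measureReal_const_false ν
    have hpos : ∑ i, (q i - p i) ≤ ∑ i, (q i - p i)⁺ := sum_le_sum fun i _ => le_posPart _
    have hnonneg : 0 ≤ ∑ i, (q i - p i)⁺ := sum_nonneg fun i _ => posPart_nonneg _
    have := pairSum_nonneg μ
    rw [sum_sub_distrib] at hpos
    exact sup_le (by linarith) (by linarith)
  have hsingle : ∑ i, (μ.real {singleTrue i} - ν.real {singleTrue i})⁺ ≤
      ∑ i, (p i - q i)⁺ + pairSum ν := by
    calc ∑ i, (μ.real {singleTrue i} - ν.real {singleTrue i})⁺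
        ≤ ∑ i, ((p i - q i)⁺ + (q i - ν.real {singleTrue i})) := by
          refine sum_le_sum fun i _ => sup_le ?_ ?_
          · linarith [measureReal_singleTrue_le μ i, le_posPart (p i - q i)]
          · linarith [measureReal_singleTrue_le ν i, posPart_nonneg (p i - q i)]
      _ ≤ ∑ i, (p i - q i)⁺ + pairSum ν := by
          rw [sum_add_distrib, pairSum]
          gcongr with i
          exact sub_le_iff_le_add'.mpr (measureReal_coord_le ν i)
  have hmany : ∑ a with 2 ≤ weight a, (μ.real {a} - ν.real {a})⁺ ≤ pairSum μ / 2 :=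
    calc ∑ a with 2 ≤ weight a, (μ.real {a} - ν.real {a})⁺
        ≤ ∑ a with 2 ≤ weight a, μ.real {a} :=
          sum_le_sum fun a _ => sup_le (sub_le_self _ measureReal_nonneg) measureReal_nonneg
      _ = μ.real {a | 2 ≤ weight a} := by rw [sum_measureReal_singleton, coe_filter_univ]
      _ ≤ pairSum μ / 2 := measureReal_two_le_weight_le μ
  have habs : ∑ i, |p i - q i| = ∑ i, (p i - q i)⁺ + ∑ i, (q i - p i)⁺ := by
    rw [← sum_add_distrib]
    refine sum_congr rfl fun i _ => ?_
    rw [← posPart_add_negPart, ← posPart_neg, neg_sub]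
  rw [sum_eq_add_sum_singleTrue_add, habs]
  linarith

end BoolCube

/-- The coupling lemma for two finite families of `{0,1}`-valued random variables. -/
theorem statement19 {Ω₁ Ω₂ : Type} [MeasureSpace Ω₁] [MeasureSpace Ω₂]
    [IsProbabilityMeasure (volume : Measure Ω₁)]
    [IsProbabilityMeasure (volume : Measure Ω₂)]
    (n : ℕ) (Y : Fin n → Ω₁ → Bool) (Z : Fin n → Ω₂ → Bool)
    (hY : ∀ i, Measurable (Y i)) (hZ : ∀ i, Measurable (Z i)) :
    ∃ (Ω : Type) (_ : MeasureSpace Ω),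
      IsProbabilityMeasure (volume : Measure Ω) ∧
      ∃ (Y' Z' : Fin n → Ω → Bool),
        (∀ i, Measurable (Y' i)) ∧ (∀ i, Measurable (Z' i)) ∧
        Measure.map (fun ω (i : Fin n) => Y' i ω) volume =
          Measure.map (fun ω (i : Fin n) => Y i ω) volume ∧
        Measure.map (fun ω (i : Fin n) => Z' i ω) volume =
          Measure.map (fun ω (i : Fin n) => Z i ω) volume ∧
        (volume {ω : Ω | ∃ i, Y' i ω ≠ Z' i ω}).toReal ≤
          (∑ i : Fin n, ∑ j ∈ Finset.univ.erase i,
            ((volume {ω : Ω₂ | Z i ω = true ∧ Z j ω = true}).toReal +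
              (volume {ω : Ω₁ | Y i ω = true ∧ Y j ω = true}).toReal)) +
          ∑ i : Fin n, |(volume {ω : Ω₁ | Y i ω = true}).toReal -
            (volume {ω : Ω₂ | Z i ω = true}).toReal| := by
  have hYm : Measurable fun ω (i : Fin n) => Y i ω := measurable_pi_lambda _ hY
  have hZm : Measurable fun ω (i : Fin n) => Z i ω := measurable_pi_lambda _ hZ
  set μ := (volume : Measure Ω₁).map fun ω i => Y i ω
  set ν := (volume : Measure Ω₂).map fun ω i => Z i ω
  have : IsProbabilityMeasure μ := Measure.isProbabilityMeasure_map hYm.aemeasurable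
  have : IsProbabilityMeasure ν := Measure.isProbabilityMeasure_map hZm.aemeasurable
  have hμν : μ Set.univ = ν Set.univ := by simp
  refine ⟨_, ⟨Measure.maximalCoupling μ ν⟩,
    (inferInstance : IsProbabilityMeasure (Measure.maximalCoupling μ ν)), fun i p => p.1 i, fun i p => p.2 i,
    fun i => (measurable_pi_apply i).comp measurable_fst,
    fun i => (measurable_pi_apply i).comp measurable_snd,
    Measure.map_fst_maximalCoupling μ ν hμν, Measure.map_snd_maximalCoupling μ ν hμν, ?_⟩
  calc (Measure.maximalCoupling μ ν {p | ∃ i, p.1 i ≠ p.2 i}).toReal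
      = (Measure.maximalCoupling μ ν {p | p.1 ≠ p.2}).toReal := by simp [Function.ne_iff]
    _ ≤ (Measure.excess μ ν Set.univ).toReal :=
      ENNReal.toReal_mono (measure_ne_top _ _) (Measure.maximalCoupling_ne_le μ ν hμν)
    _ = ∑ a, (μ.real {a} - ν.real {a})⁺ := Measure.toReal_excess_univ μ ν
    _ ≤ BoolCube.pairSum ν + BoolCube.pairSum μ +
          ∑ i, |μ.real {a | a i = true} - ν.real {a | a i = true}| :=
      BoolCube.sum_posPart_measureReal_sub_le μ ν
    _ = _ := by
      simp only [BoolCube.pairSum, μ, ν, map_measureReal_apply hYm (Set.toFinite _).measurableSet,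
        map_measureReal_apply hZm (Set.toFinite _).measurableSet, ← sum_add_distrib]
      rfl
end
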